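/- arXiv:2603.11043 — 4 statements merged into one kernel-verified Lean document; each statement's English description precedes it below -/
import Mathlib

section
/- Let α ∈ (0,1], let Y_α be a random variable with law ν_α, and set k = ⌊α⁻¹⌋. Then Var Y_α = (1/12)·(−3α²k²(k+1)² + 2αk(k+1)(2k+1)). In particular, if α = 1/k for a positive integer k then Var Y_α = (k² − 1)/12, and if α ≥ 1/2 then Var Y_α = α(1 − α). Moreover, the function f(α) := Var Y_α is continuous and non-increasing on (0,1); for each positive integer k, f is differentiable on the interval (1/(k+1), 1/k) with f''(α) < 0 there and −k(k+1)(k+2)/6 ≤ f'(α) ≤ −k(k² − 1)/6 ≤ 0; and for every integer k ≥ 2, the right derivative of f at 1/(k+1), the supremum of f' on (1/(k+1), 1/k), the value −k(k² − 1)/6, the infimum of f' on (1/k, 1/(k−1)), and the left derivative of f at 1/(k−1) are all equal. -/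
open MeasureTheory ProbabilityTheory
open scoped ENNReal ProbabilityTheory

noncomputable section

/-- `Q(μ)`: the maximal atom of a measure on `ℤ`. -/
def concQ (μ : MeasureTheory.Measure ℤ) : ℝ := ⨆ x : ℤ, (μ {x}).toReal

/-- `Q(X)`: the maximal atom of an integer-valued random variable. -/
def rvQ {Ω : Type*} [MeasurableSpace Ω] (P : MeasureTheory.Measure Ω) (X : Ω → ℤ) : ℝ :=
  ⨆ x : ℤ, (P (X ⁻¹' {x})).toReal

/-- `Q_j(μ)`: the sum of the `j` largest atoms of a measure on `ℤ`,
expressed as the supremum of the masses of sets of `j` integers. -/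
def concQk (μ : MeasureTheory.Measure ℤ) (j : ℕ) : ℝ :=
  sSup {t : ℝ | ∃ A : Finset ℤ, A.card = j ∧ t = (μ (A : Set ℤ)).toReal}

/-- `μ₁ ≼_ε μ₂`: the concentration function of `μ₁` is `ε`-dominated by that of `μ₂`. -/
def EpsDom (ε : ℝ) (μ₁ μ₂ : MeasureTheory.Measure ℤ) : Prop :=
  ∀ j : ℕ, 0 < j → concQk μ₁ j ≤ (1 + ε) * concQk μ₂ j

/-- The measure `ν_α` on `ℤ`. -/
def nu (α : ℝ) : MeasureTheory.Measure ℤ :=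
  (∑ i ∈ Finset.range ⌊α⁻¹⌋₊, ENNReal.ofReal α • MeasureTheory.Measure.dirac (i : ℤ)) +
    ENNReal.ofReal (1 - α * (⌊α⁻¹⌋₊ : ℝ)) • MeasureTheory.Measure.dirac ((⌊α⁻¹⌋₊ : ℕ) : ℤ)

/-- The law of the sum of independent random variables with laws `μ i`,
i.e. the convolution of the measures `μ i`. -/
def lawSum {n : ℕ} (μ : Fin n → MeasureTheory.Measure ℤ) : MeasureTheory.Measure ℤ :=
  MeasureTheory.Measure.map (fun x : Fin n → ℤ => ∑ i, x i) (MeasureTheory.Measure.pi μ)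

/-- The variance of a measure on `ℤ`. -/
def intVar (μ : MeasureTheory.Measure ℤ) : ℝ := variance (fun n : ℤ => (n : ℝ)) μ

/-- The variance of `ν_α`. -/
def varNu (α : ℝ) : ℝ := intVar (nu α)

/-- A measure on `ℤ` is log-concave. -/
def IsLogConcave (μ : MeasureTheory.Measure ℤ) : Prop :=
  ∀ i : ℤ, μ {i - 1} * μ {i + 1} ≤ μ {i} ^ 2

/-- A measure on `ℤ` is symmetric. -/
def IsSymmetricZ (μ : MeasureTheory.Measure ℤ) : Prop := ∀ i : ℤ, μ {-i} = μ {i}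

/-- A measure on `ℤ` is unimodal. -/
def IsUnimodal (μ : MeasureTheory.Measure ℤ) : Prop :=
  ∃ m : ℤ, (∀ i, m ≤ i → μ {i + 1} ≤ μ {i}) ∧ (∀ i, i ≤ m → μ {i - 1} ≤ μ {i})

/-- A measure on `ℤ` is standard extremal for `α`: it is the law of `X + i`
where `X ~ ν_α` or `-X ~ ν_α`. -/
def StandardExtremal (α : ℝ) (μ : MeasureTheory.Measure ℤ) : Prop :=
  ∃ i : ℤ, μ = MeasureTheory.Measure.map (· + i) (nu α) ∨
    μ = MeasureTheory.Measure.map (fun x => -x + i) (nu α)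

/-- A measure on `ℤ` is extremal for `α`. -/
def IsExtremal (α : ℝ) (μ : MeasureTheory.Measure ℤ) : Prop :=
  ∃ (S : Finset ℤ) (b : ℤ), S.card = ⌊α⁻¹⌋₊ ∧ b ∉ S ∧
    (∀ i ∈ S, μ {i} = ENNReal.ofReal α) ∧
    μ {b} = ENNReal.ofReal (1 - (⌊α⁻¹⌋₊ : ℝ) * α)

/-- A sequence of measures is a balanced standard extremal sequence for `α`. -/
def BalancedSE {n : ℕ} (α : Fin n → ℝ) (μ : Fin n → MeasureTheory.Measure ℤ) : Prop :=
  (∀ i, StandardExtremal (α i) (μ i)) ∧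
    ∃ σ : Equiv.Perm (Fin n), ∀ i,
      μ (σ i) = MeasureTheory.Measure.map (fun x : ℤ => -x) (μ i)

/-- A tuple is balanced if a balanced standard extremal sequence exists for it. -/
def BalancedTuple {n : ℕ} (α : Fin n → ℝ) : Prop := ∃ μ, BalancedSE α μ

/-- A tuple is strongly balanced if each value is attained an even number of times. -/
def StronglyBalanced {n : ℕ} (α : Fin n → ℝ) : Prop :=
  ∀ a : ℝ, Even (Finset.univ.filter fun i => α i = a).card

/-- `t_SE^bal(α)`: the probability that the sum of a balanced standard extremal
sequence for `α` equals `0` (this value does not depend on the chosen sequence). -/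
def tSEbal {n : ℕ} (α : Fin n → ℝ) : ℝ :=
  sSup {t : ℝ | ∃ μ : Fin n → MeasureTheory.Measure ℤ,
    BalancedSE α μ ∧ t = (lawSum μ {0}).toReal}

/-- `t(α)`: the supremum of `Q(μ₁ * ⋯ * μ_n)` over probability measures with
`Q(μ i) ≤ α i`. -/
def tOpt {n : ℕ} (α : Fin n → ℝ) : ℝ :=
  sSup {t : ℝ | ∃ μ : Fin n → MeasureTheory.Measure ℤ,
    (∀ i, MeasureTheory.IsProbabilityMeasure (μ i)) ∧
    (∀ i, concQ (μ i) ≤ α i) ∧ t = concQ (lawSum μ)}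

/-- `t_SE(α)`: the maximal concentration of the convolution of a standard extremal
sequence for `α`. -/
def tSE {n : ℕ} (α : Fin n → ℝ) : ℝ :=
  sSup {t : ℝ | ∃ μ : Fin n → MeasureTheory.Measure ℤ,
    (∀ i, StandardExtremal (α i) (μ i)) ∧ t = concQ (lawSum μ)}

end

/-!
For `1/(k+1) ≤ α ≤ 1/k` the measure `ν_α` has atoms `α` at `0, …, k-1` and `1 - kα` at `k`
(at `α = 1/(k+1)`, where `⌊α⁻¹⌋ = k+1`, the extra atom at `k+1` vanishes), so its variance is
the concave quadratic `varPoly k α`. Adjacent quadratics agree at their common endpoint, which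
gives continuity. The derivative `varPolyDeriv k` decreases linearly from `-k(k²-1)/6` at `1/(k+1)`
to `-k(k+1)(k+2)/6` at `1/k`; with `k-1` in place of `k` the latter is again `-k(k²-1)/6`.
-/

open Set Filter Topology

noncomputable def varPoly (k α : ℝ) : ℝ :=
  k * (k + 1) * (2 * k + 1) / 6 * α - k ^ 2 * (k + 1) ^ 2 / 4 * α ^ 2

noncomputable def varPolyDeriv (k α : ℝ) : ℝ :=
  k * (k + 1) * (2 * k + 1) / 6 - k ^ 2 * (k + 1) ^ 2 / 2 * α

section Polynomial

variable {k α : ℝ}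

theorem hasDerivAt_varPoly (k α : ℝ) : HasDerivAt (varPoly k) (varPolyDeriv k α) α := by
  have h := ((hasDerivAt_id α).const_mul (k * (k + 1) * (2 * k + 1) / 6)).sub
    ((hasDerivAt_pow 2 α).const_mul (k ^ 2 * (k + 1) ^ 2 / 4))
  exact h.congr_deriv (by simp only [varPolyDeriv]; ring)

theorem hasDerivAt_varPolyDeriv (k α : ℝ) :
    HasDerivAt (varPolyDeriv k) (-(k ^ 2 * (k + 1) ^ 2 / 2)) α := by
  have h := ((hasDerivAt_id α).const_mul (k ^ 2 * (k + 1) ^ 2 / 2)).const_sub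
    (k * (k + 1) * (2 * k + 1) / 6)
  exact h.congr_deriv (by simp)

theorem continuous_varPoly (k : ℝ) : Continuous (varPoly k) := by
  unfold varPoly; fun_prop

theorem continuous_varPolyDeriv (k : ℝ) : Continuous (varPolyDeriv k) := by
  unfold varPolyDeriv; fun_prop

theorem strictAnti_varPolyDeriv (hk : 0 < k) : StrictAnti (varPolyDeriv k) := by
  intro a b hab
  have : 0 < k ^ 2 * (k + 1) ^ 2 / 2 := by positivity
  simp only [varPolyDeriv]
  nlinarith

theorem varPoly_inv_add_one :
    varPoly k (1 / (k + 1)) = varPoly (k + 1) (1 / (k + 1)) := by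
  simp only [varPoly]
  field_simp
  ring

theorem varPolyDeriv_inv :
    varPolyDeriv k (1 / k) = -(1 / 6) * k * (k + 1) * (k + 2) := by
  simp only [varPolyDeriv]
  field_simp
  ring

theorem varPolyDeriv_inv_add_one :
    varPolyDeriv k (1 / (k + 1)) = -(1 / 6) * k * (k ^ 2 - 1) := by
  simp only [varPolyDeriv]
  field_simp
  ring

theorem varPolyDeriv_inv_lt (hk : 0 < k) : varPolyDeriv k (1 / k) < varPolyDeriv k (1 / (k + 1)) :=
  strictAnti_varPolyDeriv hk (one_div_lt_one_div_of_lt hk (by linarith))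

theorem varPolyDeriv_mem_Icc (hk : 0 < k) (hα : α ∈ Icc (1 / (k + 1)) (1 / k)) :
    varPolyDeriv k α ∈ Icc (-(1 / 6) * k * (k + 1) * (k + 2)) (-(1 / 6) * k * (k ^ 2 - 1)) := by
  rw [← varPolyDeriv_inv, ← varPolyDeriv_inv_add_one]
  exact ⟨(strictAnti_varPolyDeriv hk).antitone hα.2, (strictAnti_varPolyDeriv hk).antitone hα.1⟩

theorem antitoneOn_varPoly (hk : 1 ≤ k) : AntitoneOn (varPoly k) (Icc (1 / (k + 1)) (1 / k)) := by
  refine antitoneOn_of_deriv_nonpos (convex_Icc _ _) (continuous_varPoly k).continuousOn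
    (fun α _ => (hasDerivAt_varPoly k α).differentiableAt.differentiableWithinAt) fun α hα => ?_
  rw [interior_Icc] at hα
  rw [(hasDerivAt_varPoly k α).deriv]
  have hbound := (varPolyDeriv_mem_Icc (by linarith) (Ioo_subset_Icc_self hα)).2
  nlinarith

end Polynomial

theorem mul_floor_inv_le_one {α : ℝ} (hα : 0 ≤ α) : α * ⌊α⁻¹⌋₊ ≤ 1 := by
  rcases hα.eq_or_lt with rfl | hα
  · simp
  · calc α * ⌊α⁻¹⌋₊ ≤ α * α⁻¹ := by gcongr; exact Nat.floor_le (by positivity)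
      _ = 1 := mul_inv_cancel₀ hα.ne'

theorem integrable_nu (α : ℝ) (f : ℤ → ℝ) : Integrable f (nu α) := by
  have hdirac (i : ℤ) : Integrable f (Measure.dirac i) := integrable_dirac enorm_lt_top
  rw [nu, integrable_add_measure, integrable_finsetSum_measure]
  exact ⟨fun i _ => (hdirac i).smul_measure ENNReal.ofReal_ne_top,
    (hdirac _).smul_measure ENNReal.ofReal_ne_top⟩

theorem integral_nu {α : ℝ} (hα : 0 ≤ α) (f : ℤ → ℝ) :
    ∫ x, f x ∂(nu α) = α * ∑ i ∈ Finset.range ⌊α⁻¹⌋₊, f i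
      + (1 - α * ⌊α⁻¹⌋₊) * f (⌊α⁻¹⌋₊ : ℕ) := by
  have hdirac (i : ℤ) : Integrable f (Measure.dirac i) := integrable_dirac enorm_lt_top
  have hsum (i : ℕ) (_ : i ∈ Finset.range ⌊α⁻¹⌋₊) :
      Integrable f (ENNReal.ofReal α • Measure.dirac (i : ℤ)) :=
    (hdirac i).smul_measure ENNReal.ofReal_ne_top
  rw [nu, integral_add_measure (integrable_finsetSum_measure.2 hsum)
      ((hdirac _).smul_measure ENNReal.ofReal_ne_top), integral_finsetSum_measure hsum]
  simp only [integral_smul_measure, integral_dirac, smul_eq_mul, ENNReal.toReal_ofReal hα,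
    ENNReal.toReal_ofReal (sub_nonneg.2 (mul_floor_inv_le_one hα)), ← Finset.mul_sum]

theorem isProbabilityMeasure_nu {α : ℝ} (hα : 0 ≤ α) : IsProbabilityMeasure (nu α) := by
  constructor
  simp only [nu, Measure.coe_add, Pi.add_apply, Measure.coe_finsetSum, Finset.sum_apply,
    Measure.coe_smul, Pi.smul_apply, measure_univ, smul_eq_mul, mul_one, Finset.sum_const,
    Finset.card_range, nsmul_eq_mul]
  rw [← ENNReal.ofReal_natCast, ← ENNReal.ofReal_mul (by positivity),
    ← ENNReal.ofReal_add (by positivity) (sub_nonneg.2 (mul_floor_inv_le_one hα))]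
  norm_num [mul_comm]

theorem sum_range_intCast (n : ℕ) :
    ∑ i ∈ Finset.range n, ((i : ℤ) : ℝ) = n * (n - 1) / 2 := by
  induction n with
  | zero => simp
  | succ n ih => rw [Finset.sum_range_succ, ih]; push_cast; ring

theorem sum_range_intCast_sq (n : ℕ) :
    ∑ i ∈ Finset.range n, ((i : ℤ) : ℝ) ^ 2 = n * (n - 1) * (2 * n - 1) / 6 := by
  induction n with
  | zero => simp
  | succ n ih => rw [Finset.sum_range_succ, ih]; push_cast; ring

theorem varNu_eq_varPoly_floor {α : ℝ} (hα : 0 ≤ α) : varNu α = varPoly ⌊α⁻¹⌋₊ α := by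
  have := isProbabilityMeasure_nu hα
  have hL2 : MemLp (fun n : ℤ => (n : ℝ)) 2 (nu α) :=
    (memLp_two_iff_integrable_sq measurable_from_top.aestronglyMeasurable).2 (integrable_nu α _)
  rw [varNu, intVar, variance_eq_sub hL2, Pi.pow_def, integral_nu hα, integral_nu hα,
    sum_range_intCast, sum_range_intCast_sq]
  push_cast [varPoly]
  ring

section Pieces

variable {k : ℕ} {α : ℝ}

theorem floor_inv_eq_of_mem_Ioc (hα : α ∈ Ioc (1 / ((k : ℝ) + 1)) (1 / k)) : ⌊α⁻¹⌋₊ = k := by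
  have hα0 : 0 < α := lt_trans (by positivity) hα.1
  rw [Nat.floor_eq_iff (inv_nonneg.2 hα0.le)]
  constructor
  · rcases k.eq_zero_or_pos with rfl | hk
    · simpa using hα0.le
    · rw [le_inv_comm₀ (Nat.cast_pos.2 hk) hα0]
      simpa only [one_div] using hα.2
  · rw [inv_lt_comm₀ hα0 (Nat.cast_add_one_pos k)]
    simpa only [one_div] using hα.1

theorem exists_mem_Ioc_inv (hα : α ∈ Ioc 0 1) : ∃ k : ℕ, α ∈ Ioc (1 / ((k : ℝ) + 1)) (1 / k) := by
  have hk : 0 < ⌊α⁻¹⌋₊ := Nat.le_floor (by exact_mod_cast one_le_inv_iff₀.2 hα)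
  refine ⟨⌊α⁻¹⌋₊, ?_, ?_⟩
  · rw [one_div, inv_lt_comm₀ (Nat.cast_add_one_pos _) hα.1]
    exact Nat.lt_floor_add_one _
  · rw [one_div, le_inv_comm₀ hα.1 (Nat.cast_pos.2 hk)]
    exact Nat.floor_le (inv_nonneg.2 hα.1.le)

theorem exists_mem_Ico_inv (hα : α ∈ Ioo 0 1) : ∃ k : ℕ, α ∈ Ico (1 / ((k : ℝ) + 1)) (1 / k) := by
  have hk : 1 < α⁻¹ := one_lt_inv_iff₀.2 hα
  have hceil1 : 1 < ⌈α⁻¹⌉₊ := Nat.lt_ceil.2 (by exact_mod_cast hk)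
  obtain ⟨k, hceil⟩ : ∃ k, ⌈α⁻¹⌉₊ = k + 1 := ⟨⌈α⁻¹⌉₊ - 1, by omega⟩
  have hk0 : 0 < k := by omega
  refine ⟨k, ?_, ?_⟩
  · rw [one_div, inv_le_comm₀ (by positivity) hα.1]
    exact_mod_cast hceil ▸ Nat.le_ceil α⁻¹
  · rw [one_div, lt_inv_comm₀ hα.1 (by positivity)]
    have := Nat.ceil_lt_add_one (inv_nonneg.2 hα.1.le)
    rw [hceil] at this
    push_cast at this
    linarith

theorem varNu_eq_varPoly (hα : α ∈ Icc (1 / ((k : ℝ) + 1)) (1 / k)) : varNu α = varPoly k α := by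
  have hα0 : 0 ≤ α := le_trans (by positivity) hα.1
  rcases hα.1.eq_or_lt with rfl | hlt
  · have hfloor : ⌊(1 / ((k : ℝ) + 1))⁻¹⌋₊ = k + 1 := by
      rw [one_div, inv_inv]; exact_mod_cast Nat.floor_natCast (k + 1)
    rw [varNu_eq_varPoly_floor hα0, hfloor, Nat.cast_succ, varPoly_inv_add_one]
  · rw [varNu_eq_varPoly_floor hα0, floor_inv_eq_of_mem_Ioc ⟨hlt, hα.2⟩]

theorem continuousOn_varNu_Icc (k : ℕ) : ContinuousOn varNu (Icc (1 / ((k : ℝ) + 1)) (1 / k)) :=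
  (continuous_varPoly k).continuousOn.congr fun _ hα => varNu_eq_varPoly hα

theorem antitoneOn_varNu_Icc (hk : 0 < k) : AntitoneOn varNu (Icc (1 / ((k : ℝ) + 1)) (1 / k)) :=
  (antitoneOn_varPoly (by exact_mod_cast hk)).congr fun _ hα => (varNu_eq_varPoly hα).symm

theorem hasDerivAt_varNu (hα : α ∈ Ioo (1 / ((k : ℝ) + 1)) (1 / k)) :
    HasDerivAt varNu (varPolyDeriv k α) α :=
  (hasDerivAt_varPoly k α).congr_of_eventuallyEq <| eventually_of_mem (Ioo_mem_nhds hα.1 hα.2)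
    fun _ hβ => varNu_eq_varPoly (Ioo_subset_Icc_self hβ)

theorem deriv_deriv_varNu (hα : α ∈ Ioo (1 / ((k : ℝ) + 1)) (1 / k)) :
    deriv (deriv varNu) α = -((k : ℝ) ^ 2 * ((k : ℝ) + 1) ^ 2 / 2) := by
  have hderiv : deriv varNu =ᶠ[𝓝 α] varPolyDeriv k :=
    eventually_of_mem (Ioo_mem_nhds hα.1 hα.2) fun _ hβ => (hasDerivAt_varNu hβ).deriv
  rw [hderiv.deriv_eq, (hasDerivAt_varPolyDeriv _ _).deriv]

theorem image_deriv_varNu (hk : 0 < k) :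
    deriv varNu '' Ioo (1 / ((k : ℝ) + 1)) (1 / k) =
      Ioo (varPolyDeriv k (1 / k)) (varPolyDeriv k (1 / ((k : ℝ) + 1))) := by
  rw [image_congr fun _ hα => (hasDerivAt_varNu hα).deriv]
  have hk' : (0 : ℝ) < k := Nat.cast_pos.2 hk
  exact (continuous_varPolyDeriv k).continuousOn.image_Ioo_of_strictAntiOn
    (one_div_le_one_div_of_le hk' (by linarith)) ((strictAnti_varPolyDeriv hk').strictAntiOn _)

theorem hasDerivWithinAt_varNu_Ici (hk : 0 < k) :
    HasDerivWithinAt varNu (varPolyDeriv k (1 / ((k : ℝ) + 1))) (Ici (1 / ((k : ℝ) + 1)))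
      (1 / ((k : ℝ) + 1)) := by
  have hlt : 1 / ((k : ℝ) + 1) < 1 / k := one_div_lt_one_div_of_lt (Nat.cast_pos.2 hk) (by linarith)
  exact ((hasDerivAt_varPoly k _).hasDerivWithinAt.congr (fun _ hβ => varNu_eq_varPoly hβ)
    (varNu_eq_varPoly ⟨le_rfl, hlt.le⟩)).mono_of_mem_nhdsWithin (Icc_mem_nhdsGE hlt)

theorem hasDerivWithinAt_varNu_Iic (hk : 0 < k) :
    HasDerivWithinAt varNu (varPolyDeriv k (1 / k)) (Iic (1 / (k : ℝ))) (1 / k) := by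
  have hlt : 1 / ((k : ℝ) + 1) < 1 / k := one_div_lt_one_div_of_lt (Nat.cast_pos.2 hk) (by linarith)
  exact ((hasDerivAt_varPoly k _).hasDerivWithinAt.congr (fun _ hβ => varNu_eq_varPoly hβ)
    (varNu_eq_varPoly ⟨hlt.le, le_rfl⟩)).mono_of_mem_nhdsWithin (Icc_mem_nhdsLE hlt)

end Pieces

theorem antitoneOn_varNu_Icc_one (n : ℕ) : AntitoneOn varNu (Icc (1 / ((n : ℝ) + 1)) 1) := by
  induction n with
  | zero => simp
  | succ n ih =>
    have hpiece := antitoneOn_varNu_Icc n.succ_pos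
    push_cast at hpiece ⊢
    have h1 : 1 / ((n : ℝ) + 1 + 1) ≤ 1 / ((n : ℝ) + 1) :=
      one_div_le_one_div_of_le (by positivity) (by linarith)
    have h2 : 1 / ((n : ℝ) + 1) ≤ 1 := by
      rw [div_le_one (by positivity)]; linarith [n.cast_nonneg (α := ℝ)]
    rw [← Icc_union_Icc_eq_Icc h1 h2]
    exact hpiece.union_right ih (isGreatest_Icc h1) (isLeast_Icc h2)

theorem antitoneOn_varNu : AntitoneOn varNu (Ioo 0 1) := by
  intro x hx y hy hxy
  obtain ⟨k, hxk⟩ := exists_mem_Ioc_inv (Ioo_subset_Ioc_self hx)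
  exact antitoneOn_varNu_Icc_one k ⟨hxk.1.le, hx.2.le⟩ ⟨hxk.1.le.trans hxy, hy.2.le⟩ hxy

theorem continuousOn_varNu : ContinuousOn varNu (Ioo 0 1) := by
  intro x hx
  refine (continuousAt_iff_continuous_left_right.2 ⟨?_, ?_⟩).continuousWithinAt
  · obtain ⟨k, hxk⟩ := exists_mem_Ioc_inv (Ioo_subset_Ioc_self hx)
    exact (continuousOn_varNu_Icc k x (Ioc_subset_Icc_self hxk)).mono_of_mem_nhdsWithin
      (Icc_mem_nhdsLE_of_mem hxk)
  · obtain ⟨k, hxk⟩ := exists_mem_Ico_inv hx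
    exact (continuousOn_varNu_Icc k x (Ico_subset_Icc_self hxk)).mono_of_mem_nhdsWithin
      (Icc_mem_nhdsGE_of_mem hxk)

theorem statement1 :
    (∀ α : ℝ, 0 < α → α ≤ 1 →
      varNu α = (1 / 12) *
        (-3 * α ^ 2 * (⌊α⁻¹⌋₊ : ℝ) ^ 2 * ((⌊α⁻¹⌋₊ : ℝ) + 1) ^ 2 +
          2 * α * (⌊α⁻¹⌋₊ : ℝ) * ((⌊α⁻¹⌋₊ : ℝ) + 1) * (2 * (⌊α⁻¹⌋₊ : ℝ) + 1))) ∧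
    (∀ k : ℕ, 0 < k → varNu (1 / (k : ℝ)) = ((k : ℝ) ^ 2 - 1) / 12) ∧
    (∀ α : ℝ, 1 / 2 ≤ α → α ≤ 1 → varNu α = α * (1 - α)) ∧
    ContinuousOn varNu (Set.Ioo 0 1) ∧
    AntitoneOn varNu (Set.Ioo 0 1) ∧
    (∀ k : ℕ, 0 < k → ∀ α : ℝ, α ∈ Set.Ioo (1 / ((k : ℝ) + 1)) (1 / (k : ℝ)) →
      DifferentiableAt ℝ varNu α ∧
      deriv (deriv varNu) α < 0 ∧
      -(1 / 6 : ℝ) * (k : ℝ) * ((k : ℝ) + 1) * ((k : ℝ) + 2) ≤ deriv varNu α ∧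
      deriv varNu α ≤ -(1 / 6 : ℝ) * (k : ℝ) * ((k : ℝ) ^ 2 - 1) ∧
      -(1 / 6 : ℝ) * (k : ℝ) * ((k : ℝ) ^ 2 - 1) ≤ 0) ∧
    (∀ k : ℕ, 2 ≤ k →
      derivWithin varNu (Set.Ici (1 / ((k : ℝ) + 1))) (1 / ((k : ℝ) + 1)) =
        -(1 / 6 : ℝ) * (k : ℝ) * ((k : ℝ) ^ 2 - 1) ∧
      sSup (deriv varNu '' Set.Ioo (1 / ((k : ℝ) + 1)) (1 / (k : ℝ))) =
        -(1 / 6 : ℝ) * (k : ℝ) * ((k : ℝ) ^ 2 - 1) ∧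
      sInf (deriv varNu '' Set.Ioo (1 / (k : ℝ)) (1 / ((k : ℝ) - 1))) =
        -(1 / 6 : ℝ) * (k : ℝ) * ((k : ℝ) ^ 2 - 1) ∧
      derivWithin varNu (Set.Iic (1 / ((k : ℝ) - 1))) (1 / ((k : ℝ) - 1)) =
        -(1 / 6 : ℝ) * (k : ℝ) * ((k : ℝ) ^ 2 - 1)) := by
  refine ⟨fun α hα _ => ?_, fun k hk => ?_, fun α hα hα1 => ?_, continuousOn_varNu,
    antitoneOn_varNu, fun k hk α hα => ?_, fun k hk => ?_⟩
  · rw [varNu_eq_varPoly_floor hα.le, varPoly]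
    ring
  · have hk' : (0 : ℝ) < k := Nat.cast_pos.2 hk
    rw [varNu_eq_varPoly ⟨one_div_le_one_div_of_le hk' (by linarith), le_rfl⟩, varPoly]
    field_simp
    ring
  · rw [varNu_eq_varPoly (k := 1) (by norm_num; exact ⟨hα, hα1⟩), varPoly]
    ring
  · have hk' : (1 : ℝ) ≤ k := Nat.one_le_cast.2 hk
    have hbounds := varPolyDeriv_mem_Icc (by linarith) (Ioo_subset_Icc_self hα)
    rw [(hasDerivAt_varNu hα).deriv, deriv_deriv_varNu hα]
    refine ⟨(hasDerivAt_varNu hα).differentiableAt, ?_, hbounds.1, hbounds.2, ?_⟩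
    · have : 0 < (k : ℝ) ^ 2 * ((k : ℝ) + 1) ^ 2 / 2 := by positivity
      linarith
    · nlinarith
  · obtain ⟨j, hj, hjk⟩ : ∃ j : ℕ, 0 < j ∧ (j : ℝ) + 1 = k :=
      ⟨k - 1, by omega, by rw [Nat.cast_sub (by omega)]; simp⟩
    have hk' : 0 < k := by omega
    have hkj : (k : ℝ) - 1 = j := by linarith
    refine ⟨?_, ?_, ?_, ?_⟩
    · rw [(hasDerivWithinAt_varNu_Ici hk').derivWithin (uniqueDiffWithinAt_Ici _),
        varPolyDeriv_inv_add_one]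
    · rw [image_deriv_varNu hk', csSup_Ioo (varPolyDeriv_inv_lt (Nat.cast_pos.2 hk')),
        varPolyDeriv_inv_add_one]
    · rw [hkj, ← hjk, image_deriv_varNu hj, csInf_Ioo (varPolyDeriv_inv_lt (Nat.cast_pos.2 hj)),
        varPolyDeriv_inv]
      ring
    · rw [hkj, (hasDerivWithinAt_varNu_Iic hj).derivWithin (uniqueDiffWithinAt_Iic _),
        varPolyDeriv_inv, ← hjk]
      ring
end

section
/- If (α_1, …, α_{n−2}) ∈ (0,1]^{n−2} is a balanced tuple, α, α' ∈ [1/2, 1], and α' = (1+ε)α for some ε > 0, then t_SE^bal(α_1, …, α_{n−2}, α', α') ≤ (1 + 8αε) · t_SE^bal(α_1, …, α_{n−2}, α, α). -/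
open MeasureTheory ProbabilityTheory
open scoped ENNReal ProbabilityTheory

/-!
For `a ∈ [1/2, 1]` the law `ν_a` is the two-point law `a δ₀ + (1 - a) δ₁`, so a standard extremal
`v` for `a` is self-paired (`-v = v`) only when `v = δ₀`. Hence, after a permutation, the two
`α'`-entries of a balanced standard extremal sequence form a pair `(v, -v)`, and
`v ∗ (-v) = ν_{α'} ∗ (-ν_{α'})` is the three-point law with weight `α'(1 - α')` at `±1` and
`α'² + (1 - α')²` at `0`. Replacing the pair by `(ν_α, -ν_α)` keeps the sequence balanced and the
law `ρ` of the remaining sum unchanged, and the three-point law for `α'` is at most `1 + 8αε` times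
the one for `α`, pointwise; convolving with `ρ` gives the bound.
-/

open Measure

section Balancing

variable {ι X : Type*} {f : X → X} {μ : ι → X} {σ : Equiv.Perm ι}

lemma balancing_conj (hσ : ∀ i, μ (σ i) = f (μ i)) (e : Equiv.Perm ι) (i : ι) :
    μ (e ((e⁻¹ * σ * e) i)) = f (μ (e i)) := by
  simp [hσ]

variable [DecidableEq ι]

lemma apply_swap_of_apply_eq {T : Type*} {g : ι → T} {a b : ι} (h : g a = g b) (z : ι) :
    g (Equiv.swap a b z) = g z := by
  rcases eq_or_ne z a with rfl | hza
  · rw [Equiv.swap_apply_left, h]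
  rcases eq_or_ne z b with rfl | hzb
  · rw [Equiv.swap_apply_right, h]
  rw [Equiv.swap_apply_of_ne_of_ne hza hzb]

lemma swap_balancing_pair {T : Type*} {α : ι → T} (hσ : ∀ i, μ (σ i) = f (μ i))
    (hα : ∀ i j, μ i = f (μ j) → α i = α j) {x y : ι} (hxy : x ≠ y) (hαxy : α x = α y)
    (hx : σ x ≠ x) :
    α ∘ Equiv.swap (σ x) y = α ∧
      μ (Equiv.swap (σ x) y y) = f (μ (Equiv.swap (σ x) y x)) := by
  refine ⟨funext (apply_swap_of_apply_eq ((hα _ _ (hσ x)).trans hαxy)), ?_⟩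
  rw [Equiv.swap_apply_right, Equiv.swap_apply_of_ne_of_ne hx.symm hxy, hσ]

lemma exists_perm_balancing_pair {T : Type*} {α : ι → T} (hf : Function.Involutive f)
    (hσ : ∀ i, μ (σ i) = f (μ i)) (hα : ∀ i j, μ i = f (μ j) → α i = α j) {x y : ι}
    (hxy : x ≠ y) (hαxy : α x = α y) (hfix : f (μ x) = μ x → f (μ y) = μ y → μ x = μ y) :
    ∃ e : Equiv.Perm ι, α ∘ e = α ∧ μ (e y) = f (μ (e x)) := by
  by_cases hx : σ x = x
  · by_cases hy : σ y = y
    · refine ⟨1, rfl, ?_⟩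
      have hx' := hσ x
      rw [hx] at hx'
      rw [Equiv.Perm.one_apply, Equiv.Perm.one_apply, ← hx', hfix hx'.symm (hy ▸ hσ y).symm]
    · obtain ⟨h₁, h₂⟩ := swap_balancing_pair hσ hα hxy.symm hαxy.symm hy
      exact ⟨_, h₁, hf.eq_iff.mp h₂.symm⟩
  · obtain ⟨h₁, h₂⟩ := swap_balancing_pair hσ hα hxy hαxy hx
    exact ⟨_, h₁, h₂⟩

lemma exists_balancing_swap (hf : Function.Involutive f) (hσ : ∀ i, μ (σ i) = f (μ i))
    {x y : ι} (hxy : x ≠ y) (hpair : μ y = f (μ x)) :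
    ∃ τ : Equiv.Perm ι, (∀ i, μ (τ i) = f (μ i)) ∧ τ x = y ∧ τ y = x := by
  -- Post-composing with a swap of two entries that hold equal values keeps `σ` balancing.
  set σ₁ := Equiv.swap (σ x) y * σ
  have hσ₁ : ∀ i, μ (σ₁ i) = f (μ i) := fun i => by
    rw [Equiv.Perm.mul_apply, apply_swap_of_apply_eq ((hσ x).trans hpair.symm), hσ]
  have hσ₁x : σ₁ x = y := by simp [σ₁]
  have hσ₁y : σ₁ y ≠ y := fun h => hxy (σ₁.injective (hσ₁x.trans h.symm))
  have hxσ₁y : μ x = μ (σ₁ y) := by rw [hσ₁, hpair, hf]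
  refine ⟨Equiv.swap (σ₁ y) x * σ₁, fun i => ?_, ?_, ?_⟩
  · rw [Equiv.Perm.mul_apply, apply_swap_of_apply_eq hxσ₁y.symm, hσ₁]
  · rw [Equiv.Perm.mul_apply, hσ₁x, Equiv.swap_apply_of_ne_of_ne hσ₁y.symm hxy.symm]
  · rw [Equiv.Perm.mul_apply, Equiv.swap_apply_left]

lemma exists_balancing_update_pair (hf : Function.Involutive f) (hσ : ∀ i, μ (σ i) = f (μ i))
    {x y : ι} (hxy : x ≠ y) (hpair : μ y = f (μ x)) (w : X) :
    ∃ τ : Equiv.Perm ι, ∀ i, Function.update (Function.update μ x w) y (f w) (τ i) =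
      f (Function.update (Function.update μ x w) y (f w) i) := by
  obtain ⟨τ, hτ, hτx, hτy⟩ := exists_balancing_swap hf hσ hxy hpair
  refine ⟨τ, fun i => ?_⟩
  rcases eq_or_ne i x with rfl | hix
  · simp [hτx, hxy]
  rcases eq_or_ne i y with rfl | hiy
  · simp [hτy, hxy, hf w]
  have hτix : τ i ≠ x := fun h => hiy (τ.injective (h.trans hτy.symm))
  have hτiy : τ i ≠ y := fun h => hix (τ.injective (h.trans hτx.symm))
  simp [Function.update_of_ne, hix, hiy, hτix, hτiy, hτ]

end Balancing

instance (a : ℝ) : IsProbabilityMeasure (nu a) := by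
  constructor
  simp only [nu, Measure.coe_add, Measure.coe_finsetSum, Pi.add_apply, Finset.sum_apply,
    Measure.smul_apply, smul_eq_mul, measure_univ, mul_one, Finset.sum_const, Finset.card_range,
    nsmul_eq_mul]
  rcases Nat.eq_zero_or_pos ⌊a⁻¹⌋₊ with h | h
  · simp [h]
  have ha : 0 < a := inv_pos.mp (Nat.pos_of_floor_pos h)
  have hle : a * ⌊a⁻¹⌋₊ ≤ 1 :=
    (mul_le_mul_of_nonneg_left (Nat.floor_le (inv_nonneg.mpr ha.le)) ha.le).trans_eq
      (mul_inv_cancel₀ ha.ne')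
  rw [← ENNReal.ofReal_natCast, ← ENNReal.ofReal_mul (by positivity),
    ← ENNReal.ofReal_add (by positivity) (by linarith)]
  simp [mul_comm]

instance (μ : Measure ℤ) [IsProbabilityMeasure μ] : IsProbabilityMeasure μ.neg := by
  rw [Measure.neg_def]
  exact isProbabilityMeasure_map measurable_neg.aemeasurable

lemma neg_conv_dirac (μ : Measure ℤ) [SFinite μ] (i : ℤ) :
    (μ ∗ dirac i).neg = μ.neg ∗ dirac (-i) := by
  rw [Measure.conv_dirac, Measure.conv_dirac, Measure.neg_def, Measure.neg_def,
    Measure.map_map measurable_neg (by fun_prop), Measure.map_map (by fun_prop) measurable_neg]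
  congr 1
  ext x
  simp [add_comm]

lemma conv_dirac_apply_singleton (μ : Measure ℤ) [SFinite μ] (i x : ℤ) :
    (μ ∗ dirac i) {x} = μ {x - i} := by
  rw [Measure.conv_dirac, Measure.map_apply (by fun_prop) (measurableSet_singleton x)]
  congr 1
  ext y
  simp only [Set.mem_preimage, Set.mem_singleton_iff]
  omega

lemma neg_apply_singleton (μ : Measure ℤ) (x : ℤ) : μ.neg {x} = μ {-x} := by
  rw [Measure.neg_apply, Set.neg_singleton]

lemma standardExtremal_iff {a : ℝ} {v : Measure ℤ} :
    StandardExtremal a v ↔ ∃ i : ℤ, v = nu a ∗ dirac i ∨ v = (nu a).neg ∗ dirac i := by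
  simp only [Measure.conv_dirac, Measure.neg_def,
    Measure.map_map (measurable_add_const _) measurable_neg]
  rfl

namespace StandardExtremal

variable {a : ℝ} {v : Measure ℤ}

lemma isProbabilityMeasure (hv : StandardExtremal a v) : IsProbabilityMeasure v := by
  obtain ⟨i, rfl | rfl⟩ := standardExtremal_iff.mp hv <;> infer_instance

lemma neg (hv : StandardExtremal a v) : StandardExtremal a v.neg := by
  obtain ⟨i, rfl | rfl⟩ := standardExtremal_iff.mp hv <;> refine standardExtremal_iff.mpr ⟨-i, ?_⟩
  · exact Or.inr (neg_conv_dirac _ i)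
  · exact Or.inl (by rw [neg_conv_dirac, Measure.neg_neg])

end StandardExtremal

lemma nu_apply_singleton (a : ℝ) (x : ℤ) :
    nu a {x} = (∑ i ∈ Finset.range ⌊a⁻¹⌋₊, if (i : ℤ) = x then ENNReal.ofReal a else 0) +
      if ((⌊a⁻¹⌋₊ : ℕ) : ℤ) = x then ENNReal.ofReal (1 - a * ⌊a⁻¹⌋₊) else 0 := by
  simp [nu, Set.indicator, eq_comm]

lemma nu_apply_singleton_le {a : ℝ} (ha : 0 < a) (x : ℤ) : nu a {x} ≤ ENNReal.ofReal a := by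
  rw [nu_apply_singleton]
  by_cases hx : ((⌊a⁻¹⌋₊ : ℕ) : ℤ) = x
  · rw [if_pos hx, Finset.sum_eq_zero fun i hi => if_neg (by simp at hi; omega), zero_add]
    refine ENNReal.ofReal_le_ofReal ?_
    have := Nat.lt_floor_add_one a⁻¹
    have : 1 < a * (⌊a⁻¹⌋₊ + 1) := by
      calc 1 = a * a⁻¹ := (mul_inv_cancel₀ ha.ne').symm
        _ < a * (⌊a⁻¹⌋₊ + 1) := by gcongr
    linarith
  · rw [if_neg hx, add_zero]
    calc _ ≤ ∑ i ∈ Finset.range ⌊a⁻¹⌋₊, if i = x.toNat then ENNReal.ofReal a else 0 :=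
          Finset.sum_le_sum fun i _ => by split_ifs <;> first | omega | simp
      _ ≤ ENNReal.ofReal a := by rw [Finset.sum_ite_eq']; split_ifs <;> simp

lemma nu_apply_zero {a : ℝ} (h0 : 0 < a) (h1 : a ≤ 1) : nu a {0} = ENNReal.ofReal a := by
  have hN : 1 ≤ ⌊a⁻¹⌋₊ := Nat.le_floor (by simpa using one_le_inv₀ h0 |>.mpr h1)
  rw [nu_apply_singleton, if_neg (by omega), add_zero,
    Finset.sum_eq_single 0 (fun i _ hi => if_neg (by omega))
    (fun h => absurd (Finset.mem_range.mpr hN) h)]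
  simp

lemma StandardExtremal.iSup_apply_singleton {a : ℝ} {v : Measure ℤ} (h0 : 0 < a) (h1 : a ≤ 1)
    (hv : StandardExtremal a v) : ⨆ x, v {x} = ENNReal.ofReal a := by
  obtain ⟨i, hvi⟩ := standardExtremal_iff.mp hv
  have hatom : ∀ x, v {x} = nu a {x - i} ∨ v {x} = nu a {i - x} := by
    rcases hvi with rfl | rfl <;> intro x
    · exact Or.inl (conv_dirac_apply_singleton _ _ _)
    · rw [conv_dirac_apply_singleton, neg_apply_singleton, neg_sub]
      exact Or.inr rfl
  refine le_antisymm (iSup_le fun x => ?_) (le_iSup_of_le i ?_)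
  · rcases hatom x with h | h <;> exact h ▸ nu_apply_singleton_le h0 _
  · rcases hatom i with h | h <;> simp [h, nu_apply_zero h0 h1]

lemma StandardExtremal.unique_of_mem_Ioc {a b : ℝ} {v : Measure ℤ} (ha : a ∈ Set.Ioc 0 1)
    (hb : b ∈ Set.Ioc 0 1) (hva : StandardExtremal a v) (hvb : StandardExtremal b v) : a = b := by
  have h := (hva.iSup_apply_singleton ha.1 ha.2).symm.trans (hvb.iSup_apply_singleton hb.1 hb.2)
  exact (ENNReal.ofReal_eq_ofReal_iff ha.1.le hb.1.le).mp h

lemma two_point_conv_dirac (r s : ℝ≥0∞) (p q i : ℤ) :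
    (r • dirac p + s • dirac q) ∗ dirac i = r • dirac (p + i) + s • dirac (q + i) := by
  simp [Measure.add_conv, Measure.conv_smul_left]

lemma neg_two_point (r s : ℝ≥0∞) (p q : ℤ) :
    (r • dirac p + s • dirac q).neg = r • dirac (-p) + s • dirac (-q) := by
  rw [Measure.neg_def, Measure.map_add _ _ measurable_neg, Measure.map_smul, Measure.map_smul,
    Measure.map_dirac' measurable_neg, Measure.map_dirac' measurable_neg]

lemma nu_eq_two_point {a : ℝ} (h0 : 1 / 2 ≤ a) (h1 : a ≤ 1) :
    nu a = ENNReal.ofReal a • dirac 0 + ENNReal.ofReal (1 - a) • dirac 1 := by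
  rcases h0.eq_or_lt with rfl | h0
  · have : ⌊(1 / 2 : ℝ)⁻¹⌋₊ = 2 := by norm_num
    simp only [nu, this, Finset.sum_range_succ, Finset.sum_range_zero]
    norm_num
  · have : ⌊a⁻¹⌋₊ = 1 := by
      rw [Nat.floor_eq_iff (by positivity)]
      refine ⟨by simpa using one_le_inv₀ (by linarith) |>.mpr h1, ?_⟩
      rw [inv_lt_iff_one_lt_mul₀ (by linarith)]
      norm_num
      linarith
    simp [nu, this]

lemma StandardExtremal.exists_eq_two_point {a : ℝ} {v : Measure ℤ} (h0 : 1 / 2 ≤ a)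
    (h1 : a ≤ 1) (hv : StandardExtremal a v) :
    ∃ p q : ℤ, (q = p + 1 ∨ q = p - 1) ∧
      v = ENNReal.ofReal a • dirac p + ENNReal.ofReal (1 - a) • dirac q := by
  obtain ⟨i, rfl | rfl⟩ := standardExtremal_iff.mp hv
  · refine ⟨0 + i, 1 + i, Or.inl (by ring), ?_⟩
    rw [nu_eq_two_point h0 h1, two_point_conv_dirac]
  · refine ⟨-0 + i, -1 + i, Or.inr (by ring), ?_⟩
    rw [nu_eq_two_point h0 h1, neg_two_point, two_point_conv_dirac]

lemma StandardExtremal.eq_dirac_zero_of_neg_eq {a : ℝ} {v : Measure ℤ} (h0 : 1 / 2 ≤ a)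
    (h1 : a ≤ 1) (hv : StandardExtremal a v) (hsym : v.neg = v) : v = dirac 0 := by
  obtain ⟨p, q, hpq, rfl⟩ := hv.exists_eq_two_point h0 h1
  have hatom : ∀ x, (ENNReal.ofReal a • dirac p + ENNReal.ofReal (1 - a) • dirac q) {x} =
      (if x = p then ENNReal.ofReal a else 0) + (if x = q then ENNReal.ofReal (1 - a) else 0) := by
    intro x
    simp [Set.indicator, eq_comm]
  have hrefl : ∀ x, (ENNReal.ofReal a • dirac p + ENNReal.ofReal (1 - a) • dirac q) {-x} =
      (ENNReal.ofReal a • dirac p + ENNReal.ofReal (1 - a) • dirac q) {x} := fun x => by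
    rw [← neg_apply_singleton, hsym]
  have hp : p = 0 := by
    by_contra hp
    have h := hrefl p
    rw [hatom, hatom, if_neg (by omega), if_neg (by omega), if_pos rfl, if_neg (by omega)] at h
    simp only [add_zero] at h
    linarith [ENNReal.ofReal_eq_zero.mp h.symm]
  have hq := hrefl q
  rw [hatom, hatom, if_neg (by omega), if_neg (by omega), if_neg (by omega), if_pos rfl] at hq
  simp only [add_zero, zero_add] at hq
  have ha : a = 1 := by linarith [ENNReal.ofReal_eq_zero.mp hq.symm]
  simp [hp, ha]

lemma conv_conv_conv_comm (μ ν ρ τ : Measure ℤ) [SFinite μ] [SFinite ν] [SFinite ρ]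
    [SFinite τ] : (μ ∗ ν) ∗ (ρ ∗ τ) = (μ ∗ ρ) ∗ (ν ∗ τ) := by
  rw [Measure.conv_assoc, ← Measure.conv_assoc ν, Measure.conv_comm ν ρ, Measure.conv_assoc,
    ← Measure.conv_assoc]

lemma StandardExtremal.conv_neg {a : ℝ} {v : Measure ℤ} (hv : StandardExtremal a v) :
    v ∗ v.neg = nu a ∗ (nu a).neg := by
  obtain ⟨i, rfl | rfl⟩ := standardExtremal_iff.mp hv <;>
    rw [neg_conv_dirac, conv_conv_conv_comm, Measure.dirac_conv_dirac, add_neg_cancel,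
      Measure.conv_dirac_zero]
  rw [Measure.neg_neg, Measure.conv_comm]

lemma nu_conv_neg_nu {a : ℝ} (h0 : 1 / 2 ≤ a) (h1 : a ≤ 1) :
    nu a ∗ (nu a).neg =
      ENNReal.ofReal (a * (1 - a)) • dirac (-1) +
        ENNReal.ofReal (a ^ 2 + (1 - a) ^ 2) • dirac 0 +
          ENNReal.ofReal (a * (1 - a)) • dirac 1 := by
  have ha : 0 ≤ a := by linarith
  have ha' : 0 ≤ 1 - a := by linarith
  rw [nu_eq_two_point h0 h1, neg_two_point, ENNReal.ofReal_mul ha,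
    ENNReal.ofReal_add (by positivity) (by positivity), sq, sq, ENNReal.ofReal_mul ha,
    ENNReal.ofReal_mul ha']
  simp only [Measure.add_conv, Measure.conv_add, Measure.conv_smul_left, Measure.conv_smul_right,
    Measure.dirac_conv_dirac]
  simp only [smul_add, smul_smul, add_smul, mul_comm (ENNReal.ofReal (1 - a))]
  norm_num
  abel

lemma nu_conv_neg_nu_le {α ε : ℝ} (hα : 1 / 2 ≤ α) (hε : 0 ≤ ε) (h1 : (1 + ε) * α ≤ 1) :
    nu ((1 + ε) * α) ∗ (nu ((1 + ε) * α)).neg ≤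
      ENNReal.ofReal (1 + 8 * α * ε) • (nu α ∗ (nu α).neg) := by
  have hεα : 0 ≤ ε * α := mul_nonneg hε (by linarith)
  have hα' : 1 / 2 ≤ (1 + ε) * α := by nlinarith
  rw [nu_conv_neg_nu hα' h1, nu_conv_neg_nu hα (by nlinarith)]
  simp only [smul_add, smul_smul, ← ENNReal.ofReal_mul (by positivity : (0 : ℝ) ≤ 1 + 8 * α * ε)]
  -- `a (1 - a)` decreases on `[1/2, 1]`; from `α` to `α' = (1 + ε) α` the weight
  -- `a² + (1 - a)²` grows by `2εα (α + α' - 1) ≤ 2εα`, while `α² + (1 - α)² ≥ 1/2`.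
  have hq : (1 + ε) * α * (1 - (1 + ε) * α) ≤ (1 + 8 * α * ε) * (α * (1 - α)) := by
    nlinarith [mul_nonneg hεα (by linarith : (0 : ℝ) ≤ 2 * α + ε * α - 1),
      mul_nonneg hεα (by nlinarith : (0 : ℝ) ≤ α * (1 - α))]
  have hp : ((1 + ε) * α) ^ 2 + (1 - (1 + ε) * α) ^ 2 ≤
      (1 + 8 * α * ε) * (α ^ 2 + (1 - α) ^ 2) := by
    nlinarith [mul_nonneg hεα (by linarith : (0 : ℝ) ≤ 2 - 2 * α - ε * α),
      mul_nonneg hεα (sq_nonneg (2 * α - 1))]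
  gcongr

lemma conv_apply_le_of_le_smul (ρ : Measure ℤ) {m m' : Measure ℤ} [SFinite m] [SFinite m']
    {c : ℝ≥0∞} (h : m' ≤ c • m) (s : Set ℤ) : (ρ ∗ m') s ≤ c * (ρ ∗ m) s := by
  have : ρ ∗ m' ≤ c • (ρ ∗ m) := by
    rw [← Measure.conv_smul_right]
    exact Measure.map_mono (Measure.prod_mono le_rfl h) measurable_add
  exact this s

lemma measurable_sum_coord {ι : Type*} [Fintype ι] : Measurable fun x : ι → ℤ => ∑ i, x i :=
  Finset.measurable_sum _ fun i _ => measurable_pi_apply i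

instance {m : ℕ} (μ : Fin m → Measure ℤ) [∀ i, IsProbabilityMeasure (μ i)] :
    IsProbabilityMeasure (lawSum μ) :=
  isProbabilityMeasure_map measurable_sum_coord.aemeasurable

lemma lawSum_comp_perm {m : ℕ} (μ : Fin m → Measure ℤ) [∀ i, SigmaFinite (μ i)]
    (e : Equiv.Perm (Fin m)) : lawSum (μ ∘ e) = lawSum μ := by
  have he := measurePreserving_piCongrLeft (fun i => μ i) e
  rw [lawSum, lawSum, ← he.map_eq, Measure.map_map measurable_sum_coord he.measurable]
  congr 1
  ext x
  rw [Function.comp_apply, ← Equiv.sum_comp e (MeasurableEquiv.piCongrLeft _ e x)]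
  simp only [MeasurableEquiv.piCongrLeft_apply_apply]

lemma lawSum_eq_conv_last {m : ℕ} (μ : Fin (m + 1) → Measure ℤ) [∀ i, SigmaFinite (μ i)] :
    lawSum μ = lawSum (Fin.init μ) ∗ μ (Fin.last m) := by
  have he : MeasurePreserving (MeasurableEquiv.piFinSuccAbove (fun _ => ℤ) (Fin.last m))
      (Measure.pi μ) ((μ (Fin.last m)).prod (Measure.pi (Fin.init μ))) := by
    have := measurePreserving_piFinSuccAbove μ (Fin.last m)
    rw [Fin.succAbove_last] at this
    exact this
  rw [Measure.conv_comm, Measure.conv, lawSum, lawSum, ← Measure.map_id (μ := μ (Fin.last m)),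
    Measure.map_prod_map _ _ measurable_id measurable_sum_coord,
    Measure.map_map measurable_add (measurable_id.prodMap measurable_sum_coord), ← he.map_eq,
    Measure.map_map (measurable_add.comp (measurable_id.prodMap measurable_sum_coord))
      he.measurable]
  congr 1
  ext x
  simp [Fin.sum_univ_castSucc, Fin.init, MeasurableEquiv.piFinSuccAbove, add_comm]

section ReplacePair

variable {n : ℕ} {β : Fin n → ℝ}

lemma standardExtremal_nu (a : ℝ) : StandardExtremal a (nu a) :=
  standardExtremal_iff.mpr ⟨0, Or.inl (Measure.conv_dirac_zero _).symm⟩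

lemma append_pair_mem {s : Set ℝ} (hβ : ∀ i, β i ∈ s) {b : ℝ} (hb : b ∈ s) (i : Fin (n + 2)) :
    Fin.append β ![b, b] i ∈ s := by
  induction i using Fin.addCases with
  | left i => simpa using hβ i
  | right k => fin_cases k <;> simpa

lemma append_pair_apply_of_ne {b c : ℝ} {i : Fin (n + 2)} (h₀ : i ≠ Fin.natAdd n 0)
    (h₁ : i ≠ Fin.natAdd n 1) : Fin.append β ![b, b] i = Fin.append β ![c, c] i := by
  induction i using Fin.addCases with
  | left i => simp
  | right k => fin_cases k <;> simp_all

lemma castAdd_ne_natAdd (i : Fin n) (k : Fin 2) : Fin.castAdd 2 i ≠ Fin.natAdd n k := by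
  simp [Fin.ext_iff]
  omega

lemma lawSum_eq_conv_pair (μ : Fin (n + 2) → Measure ℤ) [∀ i, SigmaFinite (μ i)] :
    lawSum μ = lawSum (fun i => μ (Fin.castAdd 2 i)) ∗
      (μ (Fin.natAdd n 0) ∗ μ (Fin.natAdd n 1)) := by
  have : ∀ i, SigmaFinite (Fin.init μ i) := fun i => inferInstanceAs (SigmaFinite (μ _))
  rw [lawSum_eq_conv_last, lawSum_eq_conv_last (Fin.init μ), Measure.conv_assoc]
  rfl

lemma BalancedSE.exists_neg_pair (hβ : ∀ i, β i ∈ Set.Ioc 0 1) {a : ℝ} (ha : a ∈ Set.Icc (1 / 2) 1)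
    {μ : Fin (n + 2) → Measure ℤ} (hμ : BalancedSE (Fin.append β ![a, a]) μ) :
    ∃ μ₁, BalancedSE (Fin.append β ![a, a]) μ₁ ∧ lawSum μ₁ = lawSum μ ∧
      μ₁ (Fin.natAdd n 1) = (μ₁ (Fin.natAdd n 0)).neg := by
  obtain ⟨hSE, σ, hσ⟩ := hμ
  have hmem := append_pair_mem hβ (b := a) ⟨by linarith [ha.1], ha.2⟩
  have hx := hSE (Fin.natAdd n 0)
  have hy := hSE (Fin.natAdd n 1)
  simp only [Fin.append_right] at hx hy
  obtain ⟨e, he, hpair⟩ := exists_perm_balancing_pair (f := Measure.neg) Measure.neg_neg hσ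
    (fun i j hij => (hSE i).unique_of_mem_Ioc (hmem i) (hmem j) (hij ▸ (hSE j).neg))
    (x := Fin.natAdd n 0) (y := Fin.natAdd n 1) (by simp [Fin.ext_iff]) (by simp)
    (fun hx' hy' => (hx.eq_dirac_zero_of_neg_eq ha.1 ha.2 hx').trans
      (hy.eq_dirac_zero_of_neg_eq ha.1 ha.2 hy').symm)
  have := fun i => (hSE i).isProbabilityMeasure
  refine ⟨μ ∘ e, ⟨fun i => ?_, e⁻¹ * σ * e, balancing_conj hσ e⟩, lawSum_comp_perm μ e, hpair⟩
  simpa [← congrFun he i] using hSE (e i)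

lemma BalancedSE.update_neg_pair {b c : ℝ} {μ : Fin (n + 2) → Measure ℤ}
    (hμ : BalancedSE (Fin.append β ![b, b]) μ)
    (hpair : μ (Fin.natAdd n 1) = (μ (Fin.natAdd n 0)).neg) :
    BalancedSE (Fin.append β ![c, c]) (Function.update (Function.update μ (Fin.natAdd n 0)
      (nu c)) (Fin.natAdd n 1) (nu c).neg) := by
  obtain ⟨hSE, _, hσ⟩ := hμ
  have h01 : Fin.natAdd n (0 : Fin 2) ≠ Fin.natAdd n 1 := by simp [Fin.ext_iff]
  refine ⟨fun i => ?_, exists_balancing_update_pair Measure.neg_neg hσ h01 hpair _⟩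
  rcases eq_or_ne i (Fin.natAdd n 1) with rfl | h₁
  · simpa using (standardExtremal_nu c).neg
  rcases eq_or_ne i (Fin.natAdd n 0) with rfl | h₀
  · simpa [h01] using standardExtremal_nu c
  rw [Function.update_of_ne h₁, Function.update_of_ne h₀, ← append_pair_apply_of_ne h₀ h₁]
  exact hSE i

lemma BalancedSE.exists_replace_pair (hβ : ∀ i, β i ∈ Set.Ioc 0 1) {a' : ℝ}
    (ha' : a' ∈ Set.Icc (1 / 2) 1) {μ : Fin (n + 2) → Measure ℤ}
    (hμ : BalancedSE (Fin.append β ![a', a']) μ) (a : ℝ) :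
    ∃ (ρ : Measure ℤ) (μ' : Fin (n + 2) → Measure ℤ), BalancedSE (Fin.append β ![a, a]) μ' ∧
      lawSum μ = ρ ∗ (nu a' ∗ (nu a').neg) ∧ lawSum μ' = ρ ∗ (nu a ∗ (nu a).neg) := by
  obtain ⟨μ₁, hμ₁, hlaw, hpair⟩ := hμ.exists_neg_pair hβ ha'
  have hμ' := hμ₁.update_neg_pair (c := a) hpair
  have := fun i => (hμ₁.1 i).isProbabilityMeasure
  have := fun i => (hμ'.1 i).isProbabilityMeasure
  refine ⟨lawSum fun i => μ₁ (Fin.castAdd 2 i), _, hμ', ?_, ?_⟩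
  · have hx := hμ₁.1 (Fin.natAdd n 0)
    simp only [Fin.append_right] at hx
    rw [← hlaw, lawSum_eq_conv_pair, hpair, hx.conv_neg]
    rfl
  · rw [lawSum_eq_conv_pair]
    simp [Function.update_of_ne (castAdd_ne_natAdd _ _)]

end ReplacePair

lemma tSEbal_nonneg {m : ℕ} (α : Fin m → ℝ) : 0 ≤ tSEbal α :=
  Real.sSup_nonneg fun _ ⟨_, _, ht⟩ => ht ▸ ENNReal.toReal_nonneg

lemma BalancedSE.le_tSEbal {m : ℕ} {α : Fin m → ℝ} {μ : Fin m → Measure ℤ}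
    (hμ : BalancedSE α μ) : (lawSum μ {0}).toReal ≤ tSEbal α := by
  refine le_csSup ⟨1, ?_⟩ ⟨μ, hμ, rfl⟩
  rintro _ ⟨ν, hν, rfl⟩
  have := fun i => (hν.1 i).isProbabilityMeasure
  exact ENNReal.toReal_le_of_le_ofReal zero_le_one (by simpa using prob_le_one)

theorem statement7_general (n : ℕ) (β : Fin n → ℝ)
    (hβ : ∀ i, 0 < β i ∧ β i ≤ 1)
    (α α' ε : ℝ) (hα : α ∈ Set.Icc (1 / 2 : ℝ) 1) (hα' : α' ∈ Set.Icc (1 / 2 : ℝ) 1)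
    (hε : 0 < ε) (heq : α' = (1 + ε) * α) :
    tSEbal (Fin.append β ![α', α']) ≤ (1 + 8 * α * ε) * tSEbal (Fin.append β ![α, α]) := by
  have hc : 0 ≤ 1 + 8 * α * ε := by nlinarith [hα.1]
  refine Real.sSup_le ?_ (mul_nonneg hc (tSEbal_nonneg _))
  rintro _ ⟨μ, hμ, rfl⟩
  obtain ⟨ρ, μ', hμ', hlaw, hlaw'⟩ := hμ.exists_replace_pair hβ hα' α
  have hle : lawSum μ {0} ≤ ENNReal.ofReal (1 + 8 * α * ε) * lawSum μ' {0} := by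
    rw [hlaw, hlaw', heq]
    exact conv_apply_le_of_le_smul ρ (nu_conv_neg_nu_le hα.1 hε.le (heq ▸ hα'.2)) _
  calc (lawSum μ {0}).toReal ≤ (1 + 8 * α * ε) * (lawSum μ' {0}).toReal := by
        have := fun i => (hμ'.1 i).isProbabilityMeasure
        simpa [ENNReal.toReal_ofReal hc] using ENNReal.toReal_mono (by finiteness) hle
    _ ≤ (1 + 8 * α * ε) * tSEbal (Fin.append β ![α, α]) := by
        gcongr
        exact hμ'.le_tSEbal

theorem statement7 (n : ℕ) (β : Fin n → ℝ)
    (hβ : ∀ i, 0 < β i ∧ β i ≤ 1) (hbal : BalancedTuple β)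
    (α α' ε : ℝ) (hα : α ∈ Set.Icc (1 / 2 : ℝ) 1) (hα' : α' ∈ Set.Icc (1 / 2 : ℝ) 1)
    (hε : 0 < ε) (heq : α' = (1 + ε) * α) :
    tSEbal (Fin.append β ![α', α']) ≤ (1 + 8 * α * ε) * tSEbal (Fin.append β ![α, α]) :=
  statement7_general n β hβ α α' ε hα hα' hε heq
end

section
/- Let μ_1, …, μ_n and μ_1', …, μ_n' be two sequences of probability measures on ℤ such that every measure is symmetric and unimodal and μ_i' ≼ μ_i for each i ∈ {1,…,n}. Then μ_1' * ⋯ * μ_n' ≼ μ_1 * ⋯ * μ_n. -/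
open MeasureTheory ProbabilityTheory
open scoped ENNReal ProbabilityTheory

/-!
A measure on `ℤ` that is symmetric and unimodal has its mode at `0`, so its `j` largest atoms
fill the centred interval of `j` integers; between such measures `≼` just compares the masses
of centred intervals. Such a `μ` is the mixture `∑ₖ (μ{k} - μ{k+1}) • 𝟙[-k, k]` of uniform
layers. Hence `(μ ∗ ν){a}` is a nonnegative combination of the `ν`-masses of the windows
`[a - k, a + k]`, which already shows that `μ ∗ ν` is again symmetric unimodal; and summing
the windows over a centred interval gives a nonnegative combination of `ν`-masses of centred
intervals, so `μ ∗ ν` grows with `ν` for `≼`. Replacing the factors `μᵢ'` by `μᵢ` one at a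
time proves the theorem.
-/

open MeasureTheory Measure Filter Finset
open scoped Topology

lemma Finset.sum_le_sum_of_card_eq_of_le_of_le {ι M : Type*} [AddCommMonoid M] [PartialOrder M]
    [IsOrderedAddMonoid M] {s t : Finset ι} {f : ι → M} (c : M) (hcard : #s = #t)
    (hs : ∀ y ∈ s, y ∉ t → f y ≤ c) (ht : ∀ x ∈ t, x ∉ s → c ≤ f x) :
    ∑ y ∈ s, f y ≤ ∑ x ∈ t, f x := by
  classical
  calc ∑ y ∈ s, f y ≤ ∑ y ∈ s ∩ t, f y + #(s \ t) • c := by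
        rw [← sum_inter_add_sum_sdiff s t]
        gcongr
        exact sum_le_card_nsmul _ _ _ fun y hy => hs y (mem_sdiff.1 hy).1 (mem_sdiff.1 hy).2
    _ = ∑ x ∈ t ∩ s, f x + #(t \ s) • c := by rw [inter_comm, card_sdiff_comm hcard]
    _ ≤ ∑ x ∈ t, f x := by
        rw [← sum_inter_add_sum_sdiff t s]
        gcongr
        exact card_nsmul_le_sum _ _ _ fun x hx => ht x (mem_sdiff.1 hx).1 (mem_sdiff.1 hx).2

lemma ENNReal.tsum_tsub_succ_of_antitone {g : ℕ → ℝ≥0∞} (hg : Antitone g)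
    (hlim : Tendsto g atTop (𝓝 0)) : ∑' k, (g k - g (k + 1)) = g 0 := by
  have hpartial : ∀ n, ∑ k ∈ range n, (g k - g (k + 1)) = g 0 - g n := by
    intro n
    induction n with
    | zero => simp
    | succ n ih => rw [sum_range_succ, ih, tsub_add_tsub_cancel (hg n.zero_le) (hg n.le_succ)]
  rw [ENNReal.tsum_eq_iSup_nat]
  simp only [hpartial]
  rw [← ENNReal.sub_iInf, tendsto_nhds_unique (tendsto_atTop_iInf hg) hlim, tsub_zero]

lemma sum_Icc_sub_eq {M : Type*} [AddCommMonoid M] (f : ℤ → M) (a : ℤ) (k : ℕ) :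
    ∑ x ∈ Icc (-(k : ℤ)) k, f (a - x) = ∑ y ∈ Icc (a - k) (a + k), f y :=
  sum_nbij' (a - ·) (a - ·) (fun x hx => by simp only [mem_Icc] at hx ⊢; omega)
    (fun y hy => by simp only [mem_Icc] at hy ⊢; omega) (fun _ _ => sub_sub_cancel _ _)
    (fun _ _ => sub_sub_cancel _ _) (fun _ _ => rfl)

/-- The `m` consecutive integers around `0`; for even `m` the extra point is `-(m / 2)`. -/
noncomputable def centeredInterval (m : ℕ) : Finset ℤ :=
  Ico (-((m / 2 : ℕ) : ℤ)) ((m + 1) / 2 : ℕ)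

lemma mem_centeredInterval {m : ℕ} {y : ℤ} :
    y ∈ centeredInterval m ↔ -((m / 2 : ℕ) : ℤ) ≤ y ∧ y < ((m + 1) / 2 : ℕ) :=
  mem_Ico

lemma card_centeredInterval (m : ℕ) : #(centeredInterval m) = m := by
  simp only [centeredInterval, Int.card_Ico]
  omega

/-- Both sides weight `y` by the number of points of `centeredInterval j` within distance `k`
of `y`; that count is a trapezoid in `y` whose level sets are centred intervals. -/
lemma sum_sum_Icc_centeredInterval {M : Type*} [AddCommMonoid M] (f : ℤ → M) (j k : ℕ) :
    ∑ a ∈ centeredInterval j, ∑ y ∈ Icc (a - k) (a + k), f y =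
      ∑ t ∈ Icc 1 (min j (2 * k + 1)), ∑ y ∈ centeredInterval (j + 2 * k + 2 - 2 * t), f y := by
  set r : ℤ := ((j / 2 : ℕ) : ℤ)
  rw [sum_comm' (t' := centeredInterval (j + 2 * k))
      (s' := fun y => Icc (max (-r) (y - k)) (min (-r + j - 1) (y + k))) ?lhs,
    sum_comm' (t' := centeredInterval (j + 2 * k))
      (s' := fun y =>
        Icc 1 (min (min j (2 * k + 1)) (min (r + k + 1 + y).toNat (j - r + k - y).toNat))) ?rhs]
  case lhs =>
    intro a y
    simp only [mem_centeredInterval, mem_Icc]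
    omega
  case rhs =>
    intro t y
    simp only [mem_centeredInterval, mem_Icc]
    omega
  refine sum_congr rfl fun y _ => ?_
  rw [sum_const, sum_const, Int.card_Icc, Nat.card_Icc]
  congr 1
  omega

lemma tendsto_measure_singleton_natCast (μ : Measure ℤ) [IsFiniteMeasure μ] :
    Tendsto (fun k : ℕ => μ {(k : ℤ)}) atTop (𝓝 0) := by
  refine ENNReal.tendsto_atTop_zero_of_tsum_ne_top
    (ne_top_of_le_ne_top (measure_ne_top μ Set.univ) ?_)
  calc ∑' k : ℕ, μ {(k : ℤ)} ≤ ∑' x : ℤ, μ {x} :=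
        ENNReal.tsum_comp_le_tsum_of_injective Nat.cast_injective _
    _ = μ Set.univ := by
        simpa using tsum_indicator_apply_singleton μ Set.univ MeasurableSet.univ

lemma conv_apply_singleton (μ ν : Measure ℤ) [SFinite ν] (a : ℤ) :
    (μ ∗ ν) {a} = ∑' x, μ {x} * ν {a - x} := by
  rw [Measure.conv, map_apply (by fun_prop) (measurableSet_singleton a),
    Measure.prod_apply (measurable_add (measurableSet_singleton a)), lintegral_countable']
  congr 1 with x
  rw [mul_comm]
  congr 2
  ext y
  simp [eq_sub_iff_add_eq']

def IsSymmUnimodal (μ : Measure ℤ) : Prop :=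
  ∀ ⦃x y : ℤ⦄, x.natAbs ≤ y.natAbs → μ {y} ≤ μ {x}

lemma isSymmUnimodal_dirac_zero : IsSymmUnimodal (dirac 0) := by
  intro x y hxy
  rcases eq_or_ne y 0 with rfl | hy
  · rw [Int.natAbs_eq_zero.1 (Nat.le_zero.1 hxy)]
  · simp [hy.symm]

namespace IsSymmUnimodal

variable {μ : Measure ℤ}

lemma apply_natAbs (h : IsSymmUnimodal μ) (x : ℤ) : μ {(x.natAbs : ℤ)} = μ {x} :=
  le_antisymm (h (Int.natAbs_natCast _).ge) (h (Int.natAbs_natCast _).le)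

lemma apply_neg (h : IsSymmUnimodal μ) (x : ℤ) : μ {-x} = μ {x} :=
  le_antisymm (h (by simp)) (h (by simp))

lemma of_succ_le (hs : ∀ x, μ {-x} = μ {x}) (hsucc : ∀ x : ℤ, 0 ≤ x → μ {x + 1} ≤ μ {x}) :
    IsSymmUnimodal μ := by
  have hanti : Antitone fun k : ℕ => μ {(k : ℤ)} :=
    antitone_nat_of_succ_le fun k => by exact_mod_cast hsucc k k.cast_nonneg
  have habs : ∀ x : ℤ, μ {x} = μ {(x.natAbs : ℤ)} := fun x => by
    rcases Int.natAbs_eq x with hx | hx <;> nth_rw 1 [hx]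
    exact hs _
  intro x y hxy
  rw [habs x, habs y]
  exact hanti hxy

lemma of_isSymmetricZ_of_isUnimodal (hs : IsSymmetricZ μ) (hu : IsUnimodal μ) :
    IsSymmUnimodal μ := by
  obtain ⟨m, hright, hleft⟩ := hu
  refine of_succ_le hs fun i hi => ?_
  rcases le_or_gt m i with hmi | hmi
  · exact hright i hmi
  · have := hleft (-i) (by omega)
    rwa [show -i - 1 = -(i + 1) by ring, hs, hs] at this

lemma measure_le_centeredInterval (h : IsSymmUnimodal μ) (A : Finset ℤ) :
    μ A ≤ μ (centeredInterval #A) := by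
  simp only [← sum_measure_singleton]
  refine sum_le_sum_of_card_eq_of_le_of_le (μ {((#A / 2 : ℕ) : ℤ)})
    (card_centeredInterval _).symm (fun y _ hy => h ?_) (fun x hx _ => h ?_) <;>
  simp only [mem_centeredInterval] at * <;> omega

lemma concQk_eq (h : IsSymmUnimodal μ) [IsFiniteMeasure μ] (j : ℕ) :
    concQk μ j = (μ (centeredInterval j)).toReal := by
  refine IsGreatest.csSup_eq ⟨⟨centeredInterval j, card_centeredInterval j, rfl⟩, ?_⟩
  rintro _ ⟨A, rfl, rfl⟩
  exact ENNReal.toReal_mono (measure_ne_top _ _) (h.measure_le_centeredInterval A)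

lemma tsum_layer (h : IsSymmUnimodal μ) [IsFiniteMeasure μ] (x : ℤ) :
    ∑' k : ℕ, (if x.natAbs ≤ k then μ {(k : ℤ)} - μ {(k : ℤ) + 1} else 0) = μ {x} := by
  -- `g` is constant up to `|x|`, so its telescoping sum is the left-hand side
  set g : ℕ → ℝ≥0∞ := fun k => μ {((max x.natAbs k : ℕ) : ℤ)}
  have hg : Antitone g := fun a b hab => h (by simp only [Int.natAbs_natCast]; omega)
  have hlim : Tendsto g atTop (𝓝 0) := (tendsto_measure_singleton_natCast μ).comp
    (tendsto_atTop_mono (le_max_right x.natAbs) tendsto_id)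
  convert ENNReal.tsum_tsub_succ_of_antitone hg hlim using 1
  · congr 1 with k
    split_ifs with hk
    · simp only [g, max_eq_right hk, max_eq_right (hk.trans k.le_succ), Nat.cast_succ]
    · simp only [g, max_eq_left (not_le.1 hk).le, max_eq_left (Nat.succ_le_of_lt (not_le.1 hk)),
        tsub_self]
  · simp only [g, max_eq_left (Nat.zero_le _), h.apply_natAbs]

lemma tsum_mul_eq_tsum_layer (h : IsSymmUnimodal μ) [IsFiniteMeasure μ] (w : ℤ → ℝ≥0∞) :
    ∑' x, μ {x} * w x =
      ∑' k : ℕ, (μ {(k : ℤ)} - μ {(k : ℤ) + 1}) * ∑ x ∈ Icc (-(k : ℤ)) k, w x := by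
  have hwindow : ∀ k : ℕ, (μ {(k : ℤ)} - μ {(k : ℤ) + 1}) * ∑ x ∈ Icc (-(k : ℤ)) k, w x =
      ∑' x, (if x.natAbs ≤ k then μ {(k : ℤ)} - μ {(k : ℤ) + 1} else 0) * w x := by
    intro k
    rw [mul_sum, sum_eq_tsum_indicator]
    congr 1 with x
    simp only [Set.indicator_apply, mem_coe, mem_Icc, ite_mul, zero_mul]
    congr 1
    exact propext (by omega)
  simp only [hwindow]
  rw [ENNReal.tsum_comm]
  congr 1 with x
  rw [ENNReal.tsum_mul_right, h.tsum_layer]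

lemma conv_apply_singleton_eq_tsum_layer (h : IsSymmUnimodal μ) [IsFiniteMeasure μ]
    (ν : Measure ℤ) [SFinite ν] (a : ℤ) :
    (μ ∗ ν) {a} = ∑' k : ℕ, (μ {(k : ℤ)} - μ {(k : ℤ) + 1}) * ν (Icc (a - k) (a + k)) := by
  simp only [conv_apply_singleton, h.tsum_mul_eq_tsum_layer, sum_Icc_sub_eq (fun y => ν {y}),
    sum_measure_singleton]

lemma measure_Icc_succ_le (h : IsSymmUnimodal μ) {a : ℤ} (ha : 0 ≤ a) (k : ℕ) :
    μ (Icc (a + 1 - k) (a + 1 + k)) ≤ μ (Icc (a - k) (a + k)) := by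
  have hright : Icc (a + 1 - k) (a + 1 + k) = insert (a + 1 + k) (Icc (a + 1 - k) (a + k)) := by
    ext y; simp only [mem_insert, mem_Icc]; omega
  have hleft : Icc (a - k) (a + k) = insert (a - k) (Icc (a + 1 - k) (a + k)) := by
    ext y; simp only [mem_insert, mem_Icc]; omega
  simp only [← sum_measure_singleton, hright, hleft]
  rw [sum_insert (by simp), sum_insert (by simp)]
  exact add_le_add_left (h (x := a - k) (y := a + 1 + k) (by omega)) _

lemma conv {ν : Measure ℤ} (hμ : IsSymmUnimodal μ) (hν : IsSymmUnimodal ν) [IsFiniteMeasure μ]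
    [SFinite ν] : IsSymmUnimodal (μ ∗ ν) := by
  refine of_succ_le (fun a => ?_) (fun a ha => ?_)
  · rw [conv_apply_singleton, conv_apply_singleton, ← (Equiv.neg ℤ).tsum_eq]
    congr 1 with x
    rw [Equiv.neg_apply, hμ.apply_neg, show -a - -x = -(a - x) by ring, hν.apply_neg]
  · rw [hμ.conv_apply_singleton_eq_tsum_layer, hμ.conv_apply_singleton_eq_tsum_layer]
    exact ENNReal.tsum_le_tsum fun k => mul_le_mul_right (hν.measure_Icc_succ_le ha k) _

lemma conv_centeredInterval_le (hμ : IsSymmUnimodal μ) [IsFiniteMeasure μ] {ν ν' : Measure ℤ}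
    [SFinite ν] [SFinite ν'] (hν : ∀ m, ν' (centeredInterval m) ≤ ν (centeredInterval m))
    (j : ℕ) : (μ ∗ ν') (centeredInterval j) ≤ (μ ∗ ν) (centeredInterval j) := by
  have key : ∀ (ρ : Measure ℤ) [SFinite ρ], (μ ∗ ρ) (centeredInterval j) =
      ∑' k : ℕ, (μ {(k : ℤ)} - μ {(k : ℤ) + 1}) *
        ∑ t ∈ Icc 1 (min j (2 * k + 1)), ρ (centeredInterval (j + 2 * k + 2 - 2 * t)) := by
    intro ρ _
    simp only [← sum_measure_singleton, hμ.conv_apply_singleton_eq_tsum_layer,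
      ← Summable.tsum_finsetSum (fun _ _ => ENNReal.summable), ← mul_sum,
      sum_sum_Icc_centeredInterval]
  rw [key, key]
  exact ENNReal.tsum_le_tsum fun k => mul_le_mul_right (sum_le_sum fun t _ => hν _) _

end IsSymmUnimodal

lemma epsDom_zero_iff {μ ν : Measure ℤ} [IsFiniteMeasure μ] [IsFiniteMeasure ν]
    (hμ : IsSymmUnimodal μ) (hν : IsSymmUnimodal ν) :
    EpsDom 0 μ ν ↔ ∀ m, μ (centeredInterval m) ≤ ν (centeredInterval m) := by
  simp only [EpsDom, add_zero, one_mul, hμ.concQk_eq, hν.concQk_eq,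
    ENNReal.toReal_le_toReal (measure_ne_top _ _) (measure_ne_top _ _)]
  refine ⟨fun h m => ?_, fun h m _ => h m⟩
  rcases m.eq_zero_or_pos with rfl | hm
  · simp [centeredInterval]
  · exact h m hm

lemma lawSum_fin_zero (μ : Fin 0 → Measure ℤ) : lawSum μ = dirac 0 := by
  rw [lawSum, pi_of_empty, Measure.map_dirac' (by fun_prop)]
  simp

lemma lawSum_succ {n : ℕ} (μ : Fin (n + 1) → Measure ℤ) [∀ i, SigmaFinite (μ i)] :
    lawSum μ = μ 0 ∗ lawSum (fun i => μ i.succ) := by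
  have hsplit : (fun x : Fin (n + 1) → ℤ => ∑ i, x i) =
      ((fun p : ℤ × ℤ => p.1 + p.2) ∘ Prod.map id (fun y : Fin n → ℤ => ∑ i, y i)) ∘
        MeasurableEquiv.piFinSuccAbove (fun _ => ℤ) 0 := by
    ext x
    simp [Fin.sum_univ_succ, MeasurableEquiv.piFinSuccAbove_apply, Fin.insertNthEquiv, Fin.tail]
  rw [lawSum, hsplit, ← Measure.map_map (by fun_prop) (by fun_prop),
    (measurePreserving_piFinSuccAbove μ 0).map_eq, ← Measure.map_map (by fun_prop) (by fun_prop),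
    ← map_prod_map _ _ measurable_id (by fun_prop), Measure.map_id]
  rfl

instance isFiniteMeasure_lawSum {n : ℕ} (μ : Fin n → Measure ℤ) [∀ i, IsFiniteMeasure (μ i)] :
    IsFiniteMeasure (lawSum μ) := by
  unfold lawSum
  infer_instance

lemma isSymmUnimodal_lawSum : ∀ {n : ℕ} {μ : Fin n → Measure ℤ} [∀ i, IsFiniteMeasure (μ i)],
    (∀ i, IsSymmUnimodal (μ i)) → IsSymmUnimodal (lawSum μ)
  | 0, μ, _, _ => by
    rw [lawSum_fin_zero]
    exact isSymmUnimodal_dirac_zero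
  | n + 1, μ, _, h => by
    rw [lawSum_succ]
    exact (h 0).conv (isSymmUnimodal_lawSum fun i => h i.succ)

lemma lawSum_centeredInterval_le : ∀ {n : ℕ} {μ μ' : Fin n → Measure ℤ}
    [∀ i, IsFiniteMeasure (μ i)] [∀ i, IsFiniteMeasure (μ' i)],
    (∀ i, IsSymmUnimodal (μ i)) → (∀ i, IsSymmUnimodal (μ' i)) →
    (∀ i m, μ' i (centeredInterval m) ≤ μ i (centeredInterval m)) →
    ∀ m, lawSum μ' (centeredInterval m) ≤ lawSum μ (centeredInterval m)
  | 0, μ, μ', _, _, _, _, _ => by simp [lawSum_fin_zero]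
  | n + 1, μ, μ', _, _, h, h', hd => fun m => by
    have ih := lawSum_centeredInterval_le (fun i => h i.succ) (fun i => h' i.succ)
      (fun i => hd i.succ)
    rw [lawSum_succ, lawSum_succ]
    calc (μ' 0 ∗ lawSum fun i => μ' i.succ) (centeredInterval m)
        ≤ (μ' 0 ∗ lawSum fun i => μ i.succ) (centeredInterval m) :=
          (h' 0).conv_centeredInterval_le ih m
      _ = (lawSum (fun i => μ i.succ) ∗ μ' 0) (centeredInterval m) := by rw [conv_comm]
      _ ≤ (lawSum (fun i => μ i.succ) ∗ μ 0) (centeredInterval m) :=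
          (isSymmUnimodal_lawSum fun i => h i.succ).conv_centeredInterval_le (hd 0) m
      _ = (μ 0 ∗ lawSum fun i => μ i.succ) (centeredInterval m) := by rw [conv_comm]

theorem statement11 (n : ℕ) (μ μ' : Fin n → MeasureTheory.Measure ℤ)
    (hp : ∀ i, MeasureTheory.IsProbabilityMeasure (μ i))
    (hp' : ∀ i, MeasureTheory.IsProbabilityMeasure (μ' i))
    (hs : ∀ i, IsSymmetricZ (μ i)) (hs' : ∀ i, IsSymmetricZ (μ' i))
    (hu : ∀ i, IsUnimodal (μ i)) (hu' : ∀ i, IsUnimodal (μ' i))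
    (hd : ∀ i, EpsDom 0 (μ' i) (μ i)) :
    EpsDom 0 (lawSum μ') (lawSum μ) := by
  have := hp
  have := hp'
  have hSU i := IsSymmUnimodal.of_isSymmetricZ_of_isUnimodal (hs i) (hu i)
  have hSU' i := IsSymmUnimodal.of_isSymmetricZ_of_isUnimodal (hs' i) (hu' i)
  rw [epsDom_zero_iff (isSymmUnimodal_lawSum hSU') (isSymmUnimodal_lawSum hSU)]
  exact lawSum_centeredInterval_le hSU hSU' fun i => (epsDom_zero_iff (hSU' i) (hSU i)).1 (hd i)
end

section
/- Let μ and μ' be probability measures on ℤ with rational probabilities and finite supports. Assume μ' is symmetric and unimodal and μ ≼_ε μ' for some ε ≥ 0. Then there exists a coupling of random variables Z ~ μ⁺ and X' ~ μ' and an event A with P(A) ≥ 1/(1+ε) such that the conditional law of Z given A is μ⁺ and, conditioned on A, either 0 ≤ X' ≤ Z or Z − 1 ≤ X' ≤ 0; moreover, if P(Aᶜ) > 0 then the conditional law of Z given Aᶜ is μ⁺ and Z and X' are conditionally independent given Aᶜ. -/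
open MeasureTheory ProbabilityTheory
open scoped ENNReal ProbabilityTheory

/-- The enumeration `0, 1, -1, 2, -2, …` of the integers. -/
def zenum (n : ℕ) : ℤ := if n % 2 = 1 then ((n : ℤ) + 1) / 2 else -((n : ℤ) / 2)

/-- `ν` is the rearrangement `μ⁺` of `μ`: a rearrangement of the atoms of `μ`
which is non-increasing along the enumeration `0, 1, -1, 2, -2, …`. -/
def IsPlusRearrangement (μ ν : MeasureTheory.Measure ℤ) : Prop :=
  (∃ f : ℤ ≃ ℤ, ∀ x : ℤ, ν {x} = μ {f x}) ∧
    ∀ m n : ℕ, m ≤ n → ν {zenum n} ≤ ν {zenum m}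

/-- `ν` is the rearrangement `⁺μ` of `μ`: a rearrangement of the atoms of `μ`
which is non-increasing along the enumeration `0, -1, 1, -2, 2, …`. -/
def IsMinusRearrangement (μ ν : MeasureTheory.Measure ℤ) : Prop :=
  (∃ f : ℤ ≃ ℤ, ∀ x : ℤ, ν {x} = μ {f x}) ∧
    ∀ m n : ℕ, m ≤ n → ν {-zenum n} ≤ ν {-zenum m}

/-- `ν` is the symmetric decreasing rearrangement `μ*` of `μ` (it exists iff `μ⁺ = ⁺μ`). -/
def IsSymmDecRearrangement (μ ν : MeasureTheory.Measure ℤ) : Prop :=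
  IsPlusRearrangement μ ν ∧ IsMinusRearrangement μ ν

/-- A coupling witnessing the conclusion of Statement 12: random variables
`Z ~ ν` and `X' ~ μ'` on a common probability space together with an event `A`. -/
structure PlusCoupling (ν μ' : MeasureTheory.Measure ℤ) (ε : ℝ) where
  (Ω : Type)
  [mΩ : MeasurableSpace Ω]
  (P : MeasureTheory.Measure Ω)
  (probP : MeasureTheory.IsProbabilityMeasure P)
  (Z : Ω → ℤ)
  (X' : Ω → ℤ)
  (A : Set Ω)
  (measZ : Measurable Z)
  (measX' : Measurable X')
  (measA : MeasurableSet A)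
  (lawZ : MeasureTheory.Measure.map Z P = ν)
  (lawX' : MeasureTheory.Measure.map X' P = μ')
  (probA : 1 / (1 + ε) ≤ (P A).toReal)
  (condLawZ : MeasureTheory.Measure.map Z (P[|A]) = ν)
  (order : ∀ᵐ ω ∂P, ω ∈ A →
    (0 ≤ X' ω ∧ X' ω ≤ Z ω) ∨ (Z ω - 1 ≤ X' ω ∧ X' ω ≤ 0))
  (condLawZcompl : P Aᶜ ≠ 0 → MeasureTheory.Measure.map Z (P[|Aᶜ]) = ν)
  (indepCompl : P Aᶜ ≠ 0 → IndepFun Z X' (P[|Aᶜ]))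

/-!
Sort the atoms of `μ` along `0, 1, -1, 2, -2, …` to get `ν = μ⁺`. Concentration domination,
together with the symmetry and unimodality of `μ'`, says that the first `j` atoms of `ν` weigh
at most `d` times the first `j` atoms of `μ'` (in the same order), for a rational `d ≤ 1 + ε`.
An interleaving argument upgrades this to Hall's condition: every finite set `B` of values of `Z`
has `ν`-mass at most `d` times the `μ'`-mass of the values `x` that some `z ∈ B` allows
(`0 ≤ x ≤ z` or `z - 1 ≤ x ≤ 0`). As all masses are rational, clearing denominators and Hall's
marriage theorem give a coupling `π` of `ν` with a measure `≤ d • μ'` respecting the order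
constraint. The event `A` has probability `1 / d` and law `π`; off `A`, `Z ~ ν` is independent
of `X'`, whose law there is the normalised remainder of `μ'`.
-/

open Finset

namespace ConcentrationCoupling

lemma zenum_two_mul_add_one (k : ℕ) : zenum (2 * k + 1) = k + 1 := by
  unfold zenum; split_ifs <;> omega

lemma zenum_two_mul (k : ℕ) : zenum (2 * k) = -k := by
  unfold zenum; split_ifs <;> omega

def zenumInv (z : ℤ) : ℕ := if 0 < z then (2 * z - 1).toNat else (-(2 * z)).toNat

lemma zenumInv_of_pos {z : ℤ} (hz : 0 < z) : zenumInv z = 2 * (z - 1).toNat + 1 := by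
  unfold zenumInv; split_ifs; omega

lemma zenumInv_of_nonpos {z : ℤ} (hz : ¬ 0 < z) : zenumInv z = 2 * (-z).toNat := by
  unfold zenumInv; split_ifs; omega

def zenumEquiv : ℕ ≃ ℤ where
  toFun := zenum
  invFun := zenumInv
  left_inv n := by
    obtain ⟨k, rfl | rfl⟩ := Nat.even_or_odd' n
    · rw [zenum_two_mul, zenumInv_of_nonpos (by omega)]; omega
    · rw [zenum_two_mul_add_one, zenumInv_of_pos (by omega)]; omega
  right_inv z := by
    by_cases hz : 0 < z
    · rw [zenumInv_of_pos hz, zenum_two_mul_add_one]; omega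
    · rw [zenumInv_of_nonpos hz, zenum_two_mul]; omega

@[simp] lemma zenum_zenumInv (z : ℤ) : zenum (zenumInv z) = z := zenumEquiv.right_inv z

lemma zenum_injective : Function.Injective zenum := zenumEquiv.injective

section AntitoneSums

variable {R : Type*}

lemma _root_.Antitone.sum_le_sum_range [AddCommMonoid R] [PartialOrder R] [IsOrderedAddMonoid R]
    {u : ℕ → R} (hu : Antitone u) (B : Finset ℕ) :
    ∑ b ∈ B, u b ≤ ∑ i ∈ range #B, u i := by
  induction B using Finset.induction_on_max with
  | empty => simp
  | insert a s ha ih =>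
    have has : a ∉ s := fun h => lt_irrefl a (ha a h)
    have hcard : #s ≤ a := by simpa using card_le_card fun x hx => mem_range.2 (ha x hx)
    rw [sum_insert has, card_insert_of_notMem has, sum_range_succ, add_comm]
    exact add_le_add ih (hu hcard)

lemma _root_.Antitone.sum_comp_le_sum_range [AddCommMonoid R] [PartialOrder R]
    [IsOrderedAddMonoid R] {ι : Type*} [DecidableEq ι] {u : ℕ → R} (hu : Antitone u)
    {B : Finset ι} {g : ι → ℕ} (hg : Set.InjOn g B) :
    ∑ b ∈ B, u (g b) ≤ ∑ i ∈ range #B, u i := by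
  rw [← sum_image hg, ← card_image_of_injOn hg]
  exact hu.sum_le_sum_range _

lemma sum_range_two_mul [AddCommMonoid R] (u : ℕ → R) (s : ℕ) :
    ∑ i ∈ range (2 * s), u i = ∑ i ∈ range s, u (2 * i) + ∑ i ∈ range s, u (2 * i + 1) := by
  induction s with
  | zero => simp
  | succ s ih =>
    rw [Nat.mul_succ, sum_range_succ, sum_range_succ, ih, sum_range_succ, sum_range_succ]
    abel

lemma sum_range_two_mul_add_one [AddCommMonoid R] (u : ℕ → R) (s : ℕ) :
    ∑ i ∈ range (2 * s + 1), u i = u 0 + ∑ i ∈ range s, (u (2 * i + 1) + u (2 * i + 2)) := by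
  rw [sum_range_succ', sum_range_two_mul, ← sum_add_distrib, add_comm]

variable [Field R] [LinearOrder R] [IsStrictOrderedRing R] {p q : ℕ → R}

lemma sum_odd_add_sum_even_le (hp : Antitone p) (hp0 : ∀ i, 0 ≤ p i) (s t : ℕ) :
    ∑ i ∈ range s, p (2 * i + 1) + ∑ i ∈ range t, p (2 * i)
      ≤ ∑ i ∈ range (s + 1), p (2 * i) + ∑ i ∈ range t, p (2 * i + 1) := by
  rcases le_or_gt t s with hts | hst
  · rw [← sum_range_add_sum_Ico _ hts, ← sum_range_add_sum_Ico _ (hts.trans s.le_succ)]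
    have h1 : ∑ i ∈ Ico t s, p (2 * i + 1) ≤ ∑ i ∈ Ico t s, p (2 * i) :=
      sum_le_sum fun i _ => hp (by omega)
    have h2 : ∑ i ∈ Ico t s, p (2 * i) ≤ ∑ i ∈ Ico t (s + 1), p (2 * i) :=
      sum_le_sum_of_subset_of_nonneg (Ico_subset_Ico_right s.le_succ) fun i _ _ => hp0 _
    linarith
  · obtain ⟨k, rfl⟩ := Nat.exists_eq_add_of_lt hst
    rw [← sum_range_add_sum_Ico _ (by omega : s + 1 ≤ s + k + 1),
      ← sum_range_add_sum_Ico (fun i => p (2 * i + 1)) (by omega : s ≤ s + k + 1)]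
    have h1 : ∑ i ∈ Ico (s + 1) (s + k + 1), p (2 * i) = ∑ i ∈ Ico s (s + k), p (2 * (i + 1)) := by
      rw [sum_Ico_add' (fun i => p (2 * i))]
    have h2 : ∑ i ∈ Ico s (s + k), p (2 * (i + 1)) ≤ ∑ i ∈ Ico s (s + k), p (2 * i + 1) :=
      sum_le_sum fun i _ => hp (by omega)
    have h3 : ∑ i ∈ Ico s (s + k), p (2 * i + 1) ≤ ∑ i ∈ Ico s (s + k + 1), p (2 * i + 1) :=
      sum_le_sum_of_subset_of_nonneg (Ico_subset_Ico_right (by omega)) fun i _ _ => hp0 _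
    linarith

/-- With prefix sums `P`, `Q`: twice the left side is at most `P (2s + 1) + P (2t)`, while, `q`
coming in equal pairs, twice the right side is `d (Q (2s + 1) + Q (2t + 1))`. -/
lemma sum_odd_add_sum_even_le_mul (hp : Antitone p) (hp0 : ∀ i, 0 ≤ p i) (hq0 : ∀ i, 0 ≤ q i)
    (hq : ∀ i, q (2 * i + 2) = q (2 * i + 1)) {d : R} (hd : 0 ≤ d)
    (hpq : ∀ j, ∑ i ∈ range j, p i ≤ d * ∑ i ∈ range j, q i) (s t : ℕ) :
    ∑ i ∈ range s, p (2 * i + 1) + ∑ i ∈ range t, p (2 * i)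
      ≤ d * (q 0 + ∑ i ∈ range s, q (2 * i + 1) + ∑ i ∈ range t, q (2 * i + 2)) := by
  have hodd : ∑ i ∈ range (2 * s + 1), q i = q 0 + 2 * ∑ i ∈ range s, q (2 * i + 1) := by
    rw [sum_range_two_mul_add_one, mul_sum]
    exact congrArg _ (sum_congr rfl fun i _ => by rw [hq]; ring)
  have heven : ∑ i ∈ range (2 * t + 1), q i = q 0 + 2 * ∑ i ∈ range t, q (2 * i + 2) := by
    rw [sum_range_two_mul_add_one, mul_sum]
    exact congrArg _ (sum_congr rfl fun i _ => by rw [hq]; ring)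
  have hPodd : ∑ i ∈ range (2 * s + 1), p i
      = ∑ i ∈ range (s + 1), p (2 * i) + ∑ i ∈ range s, p (2 * i + 1) := by
    rw [sum_range_succ, sum_range_two_mul, sum_range_succ _ s]; ring
  have hPeven := sum_range_two_mul p t
  have hQ : ∑ i ∈ range (2 * t), q i ≤ ∑ i ∈ range (2 * t + 1), q i := by
    rw [sum_range_succ]; linarith [hq0 (2 * t)]
  have hinter := sum_odd_add_sum_even_le hp hp0 s t
  have h1 := hpq (2 * s + 1)
  have h2 := hpq (2 * t)
  have h3 := mul_le_mul_of_nonneg_left hQ hd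
  rw [hodd] at h1
  rw [heven] at h3
  linarith

end AntitoneSums

lemma exists_equivFin_antitone {α β : Type*} [LinearOrder β] (T : Finset α) (w : α → β) :
    ∃ σ : Fin #T ≃ T, Antitone fun i => w (σ i) := by
  set e := T.equivFin.symm
  exact ⟨(Tuple.sort fun i => OrderDual.toDual (w (e i))).trans e,
    fun i j hij => Tuple.monotone_sort (fun i => OrderDual.toDual (w (e i))) hij⟩

lemma exists_equiv_nat_antitone {α : Type*} [Countable α] [Infinite α] (w : α → ℝ≥0∞)
    (T : Finset α) (hT : ∀ x ∉ T, w x = 0) :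
    ∃ g : ℕ ≃ α, Antitone (w ∘ g) ∧ ∀ j, #T ≤ j → w (g j) = 0 := by
  classical
  obtain ⟨σ, hσ⟩ := exists_equivFin_antitone T w
  have : Infinite {i : ℕ // ¬ i < #T} := (Set.finite_lt_nat #T).infinite_compl.to_subtype
  have : Infinite {x // x ∉ T} := T.finite_toSet.infinite_compl.to_subtype
  obtain ⟨e⟩ : Nonempty ({i : ℕ // ¬ i < #T} ≃ {x // x ∉ T}) := nonempty_equiv_of_countable
  set g : ℕ ≃ α := (Equiv.sumCompl (· < #T)).symm.trans <|
    (Equiv.sumCongr (Fin.equivSubtype.symm.trans σ) e).trans (Equiv.sumCompl (· ∈ T))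
  have hlt (j : ℕ) (hj : j < #T) : g j = σ ⟨j, hj⟩ := by
    simp [g, Equiv.sumCompl, hj, Fin.equivSubtype]
  have hge (j : ℕ) (hj : #T ≤ j) : g j ∉ T := by
    simpa [g, Equiv.sumCompl, not_lt.2 hj] using (e ⟨j, not_lt.2 hj⟩).2
  refine ⟨g, fun i j hij => ?_, fun j hj => hT _ (hge j hj)⟩
  rcases lt_or_ge j #T with hj | hj
  · simp only [Function.comp_apply, hlt i (hij.trans_lt hj), hlt j hj]
    exact hσ (Fin.mk_le_mk.2 hij)
  · simp [hT _ (hge j hj)]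

theorem exists_isPlusRearrangement (μ : Measure ℤ) [IsProbabilityMeasure μ]
    (hfin : ∃ s : Finset ℤ, ∀ x ∉ s, μ {x} = 0) :
    ∃ ν, IsProbabilityMeasure ν ∧ IsPlusRearrangement μ ν ∧
      ∃ n, ∀ j, n ≤ j → ν {zenum j} = 0 := by
  obtain ⟨T, hT⟩ := hfin
  obtain ⟨g, hg, hgT⟩ := exists_equiv_nat_antitone (fun x => μ {x}) T hT
  set f : ℤ ≃ ℤ := zenumEquiv.symm.trans g
  have hν (x : ℤ) : μ.map f.symm {x} = μ {f x} := by
    rw [Measure.map_apply (measurable_of_countable _) (measurableSet_singleton x)]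
    congr 1
    ext y
    simp [Equiv.symm_apply_eq]
  have hfz (j : ℕ) : f (zenum j) = g j := congrArg g (zenumEquiv.symm_apply_apply j)
  refine ⟨μ.map f.symm, Measure.isProbabilityMeasure_map (measurable_of_countable _).aemeasurable,
    ⟨⟨f, hν⟩, fun i j hij => ?_⟩, #T, fun j hj => ?_⟩
  · rw [hν, hν, hfz, hfz]; exact hg hij
  · rw [hν, hfz]; exact hgT j hj

lemma sum_range_toReal_le_concQk (μ : Measure ℤ) [IsFiniteMeasure μ] {g : ℕ → ℤ}
    (hg : Function.Injective g) (j : ℕ) :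
    ∑ i ∈ range j, (μ {g i}).toReal ≤ concQk μ j := by
  refine le_csSup ⟨(μ Set.univ).toReal, ?_⟩
    ⟨(range j).image g, by simp [card_image_of_injective _ hg], ?_⟩
  · rintro _ ⟨A, -, rfl⟩
    exact ENNReal.toReal_mono (measure_ne_top _ _) (measure_mono (Set.subset_univ _))
  · rw [← sum_measure_singleton, ENNReal.toReal_sum fun _ _ => measure_ne_top _ _,
      sum_image hg.injOn]

lemma concQk_le_sum_range (μ : Measure ℤ) [IsFiniteMeasure μ] (g : ℕ ≃ ℤ)
    (hg : Antitone fun i => μ {g i}) (j : ℕ) :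
    concQk μ j ≤ ∑ i ∈ range j, (μ {g i}).toReal := by
  have hu : Antitone fun i => (μ {g i}).toReal :=
    fun i j hij => ENNReal.toReal_mono (measure_ne_top _ _) (hg hij)
  refine Real.sSup_le ?_ (sum_nonneg fun _ _ => ENNReal.toReal_nonneg)
  rintro _ ⟨A, rfl, rfl⟩
  rw [← sum_measure_singleton, ENNReal.toReal_sum fun _ _ => measure_ne_top _ _]
  simpa using hu.sum_comp_le_sum_range (B := A) g.symm.injective.injOn

lemma sum_range_toReal_le_of_epsDom {μ μ' ν : Measure ℤ} [IsFiniteMeasure μ] [IsFiniteMeasure μ']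
    {ε : ℝ} (hε : 0 ≤ 1 + ε) (hdom : EpsDom ε μ μ') (hν : IsPlusRearrangement μ ν)
    (hμ' : Antitone fun k => μ' {zenum k}) {j : ℕ} (hj : 0 < j) :
    ∑ i ∈ range j, (ν {zenum i}).toReal ≤ (1 + ε) * ∑ i ∈ range j, (μ' {zenum i}).toReal := by
  obtain ⟨⟨f, hf⟩, -⟩ := hν
  simp only [hf]
  calc ∑ i ∈ range j, (μ {f (zenum i)}).toReal ≤ concQk μ j :=
        sum_range_toReal_le_concQk μ (f.injective.comp zenum_injective) j
    _ ≤ (1 + ε) * concQk μ' j := hdom j hj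
    _ ≤ (1 + ε) * ∑ i ∈ range j, (μ' {zenum i}).toReal :=
        mul_le_mul_of_nonneg_left (concQk_le_sum_range μ' zenumEquiv hμ' j) hε

lemma measure_singleton_succ_le {μ : Measure ℤ} (hsymm : IsSymmetricZ μ) (huni : IsUnimodal μ)
    {x : ℤ} (hx : 0 ≤ x) : μ {x + 1} ≤ μ {x} := by
  obtain ⟨m, hm₁, hm₂⟩ := huni
  rcases le_or_gt m x with h | h
  · exact hm₁ x h
  · rw [← hsymm (x + 1), ← hsymm x, show -(x + 1) = -x - 1 by ring]
    exact hm₂ (-x) (by omega)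

theorem antitone_measure_zenum {μ : Measure ℤ} (hsymm : IsSymmetricZ μ) (huni : IsUnimodal μ) :
    Antitone fun k => μ {zenum k} := by
  refine antitone_nat_of_succ_le fun k => ?_
  obtain ⟨i, rfl | rfl⟩ := Nat.even_or_odd' k
  · rw [zenum_two_mul_add_one, zenum_two_mul, hsymm]
    exact measure_singleton_succ_le hsymm huni (by positivity)
  · rw [show 2 * i + 1 + 1 = 2 * (i + 1) by ring, zenum_two_mul_add_one, zenum_two_mul,
      hsymm]
    push_cast; rfl

lemma measure_singleton_zenum_zero_ne_zero {μ : Measure ℤ} [IsProbabilityMeasure μ]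
    (h : Antitone fun k => μ {zenum k}) : μ {zenum 0} ≠ 0 := by
  intro h0
  refine IsProbabilityMeasure.ne_zero μ (Measure.ext_of_singleton fun x => ?_)
  rw [← zenum_zenumInv x, Measure.coe_zero, Pi.zero_apply]
  exact le_antisymm (h0 ▸ h (Nat.zero_le _)) zero_le

lemma exists_rat_atoms {μ : Measure ℤ} (h : ∀ x : ℤ, ∃ q : ℚ, μ {x} = ENNReal.ofReal q) :
    ∃ a : ℤ → ℚ, (∀ x, 0 ≤ a x) ∧ ∀ x, μ {x} = ENNReal.ofReal (a x) := by
  choose q hq using h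
  refine ⟨fun x => max (q x) 0, fun x => le_max_right _ _, fun x => ?_⟩
  rw [hq, Rat.cast_max, Rat.cast_zero, ENNReal.ofReal_max, ENNReal.ofReal_zero, max_eq_left zero_le]

lemma exists_rat_le_of_sum_le {p q : ℕ → ℚ} (n : ℕ) (hp : ∀ j, n ≤ j → p j = 0)
    (hq0 : ∀ i, 0 ≤ q i) (hq : 0 < q 0) {ε : ℝ} (hε : 0 ≤ ε)
    (h : ∀ j, 0 < j → ∑ i ∈ range j, (p i : ℝ) ≤ (1 + ε) * ∑ i ∈ range j, (q i : ℝ)) :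
    ∃ d : ℚ, 1 ≤ d ∧ (d : ℝ) ≤ 1 + ε ∧ ∀ j, ∑ i ∈ range j, p i ≤ d * ∑ i ∈ range j, q i := by
  set P := fun j => ∑ i ∈ range j, p i
  set Q := fun j => ∑ i ∈ range j, q i
  set r := (range (n + 1)).sup' nonempty_range_add_one fun j => P j / Q j
  have hQ {j} (hj : 0 < j) : 0 < Q j :=
    hq.trans_le (single_le_sum (fun i _ => hq0 i) (mem_range.2 hj))
  have hle {j} (hj : j ≤ n) : P j ≤ max 1 r * Q j := by
    rcases j.eq_zero_or_pos with rfl | hj0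
    · simp [P, Q]
    · exact (div_le_iff₀ (hQ hj0)).1 ((le_sup' (fun j => P j / Q j) (mem_range.2 (by omega))).trans
        (le_max_right _ _))
  refine ⟨max 1 r, le_max_left _ _, ?_, fun j => ?_⟩
  · obtain ⟨j, -, hj⟩ : ∃ j ∈ range (n + 1), r = P j / Q j := exists_mem_eq_sup' _ _
    rw [Rat.cast_max, Rat.cast_one, hj]
    refine max_le (by linarith) ?_
    rcases j.eq_zero_or_pos with rfl | hj0
    · simp [P, Q]; linarith
    · rw [Rat.cast_div, div_le_iff₀ (by exact_mod_cast hQ hj0)]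
      exact_mod_cast h j hj0
  · rcases le_or_gt j n with hj | hj
    · exact hle hj
    · have hPj : P j = P n := (sum_subset (range_subset_range.2 hj.le) fun i hi hin =>
        hp i (by simpa using hin)).symm
      have hQj : Q n ≤ Q j :=
        sum_le_sum_of_subset_of_nonneg (range_subset_range.2 hj.le) fun i _ _ => hq0 i
      calc P j = P n := hPj
        _ ≤ max 1 r * Q n := hle le_rfl
        _ ≤ max 1 r * Q j := mul_le_mul_of_nonneg_left hQj (by positivity)

/-- The values of `X'` allowed on the event `A` when `Z = z`. -/
noncomputable def orderWindow (z : ℤ) : Finset ℤ := Icc 0 z ∪ Icc (z - 1) 0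

lemma mem_orderWindow {x z : ℤ} : x ∈ orderWindow z ↔ (0 ≤ x ∧ x ≤ z) ∨ (z - 1 ≤ x ∧ x ≤ 0) := by
  simp [orderWindow]

lemma exists_mem_add_card_le_of_lt {B : Finset ℤ} {a : ℤ} (hB : ∀ z ∈ B, a < z) (hne : B.Nonempty) :
    ∃ z ∈ B, a + #B ≤ z := by
  by_contra! h
  have := card_le_card fun z hz => mem_Ioo.2 ⟨hB z hz, h z hz⟩
  rw [Int.card_Ioo] at this
  have := hne.card_pos
  omega

lemma exists_mem_add_card_le_of_gt {B : Finset ℤ} {a : ℤ} (hB : ∀ z ∈ B, z < a) (hne : B.Nonempty) :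
    ∃ z ∈ B, z + #B ≤ a := by
  by_contra! h
  have := card_le_card fun z hz => mem_Ioo.2 ⟨(by linarith [h z hz] : a - #B < z), hB z hz⟩
  rw [Int.card_Ioo] at this
  have := hne.card_pos
  omega

/-- `zenum` maps these indices onto `[-t, s]`. -/
def windowIndices (s t : ℕ) : Finset ℕ :=
  insert 0 ((range s).image (2 * · + 1) ∪ (range t).image (2 * · + 2))

lemma sum_windowIndices {R : Type*} [AddCommMonoid R] (u : ℕ → R) (s t : ℕ) :
    ∑ k ∈ windowIndices s t, u k
      = u 0 + ∑ i ∈ range s, u (2 * i + 1) + ∑ i ∈ range t, u (2 * i + 2) := by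
  have hdisj : Disjoint ((range s).image (2 * · + 1)) ((range t).image (2 * · + 2)) := by
    simp only [disjoint_left, mem_image]
    omega
  rw [windowIndices, sum_insert (by simp), sum_union hdisj,
    sum_image (by intro x _ y _ h; simp only at h; omega),
    sum_image (by intro x _ y _ h; simp only at h; omega), add_assoc]

lemma image_zenum_windowIndices_subset {B : Finset ℤ} (hB : B.Nonempty) :
    (windowIndices #{z ∈ B | 0 < z} #{z ∈ B | ¬ 0 < z}).image zenum ⊆ B.biUnion orderWindow := by
  intro x hx
  simp only [windowIndices, mem_image, mem_insert, mem_union, mem_range] at hx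
  simp only [mem_biUnion, mem_orderWindow]
  obtain ⟨k, hk | ⟨i, hi, rfl⟩ | ⟨i, hi, rfl⟩, rfl⟩ := hx
  · obtain ⟨z, hz⟩ := hB
    exact ⟨z, hz, by rw [hk, zenum]; omega⟩
  · obtain ⟨z, hz, hzs⟩ := exists_mem_add_card_le_of_lt (B := {z ∈ B | 0 < z}) (a := 0)
      (fun z hz => (mem_filter.1 hz).2) (card_pos.1 (by omega))
    refine ⟨z, (mem_filter.1 hz).1, Or.inl ?_⟩
    rw [zenum_two_mul_add_one]; omega
  · obtain ⟨z, hz, hzt⟩ := exists_mem_add_card_le_of_gt (B := {z ∈ B | ¬ 0 < z}) (a := 1)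
      (fun z hz => by have := (mem_filter.1 hz).2; omega) (card_pos.1 (by omega))
    refine ⟨z, (mem_filter.1 hz).1, Or.inr ?_⟩
    rw [show 2 * i + 2 = 2 * (i + 1) by ring, zenum_two_mul]; omega

section HallCondition

variable {R : Type*} [Field R] [LinearOrder R] [IsStrictOrderedRing R]

/-- The positive part of `B` carries at most the `a`-mass of `[1, s]` and the nonpositive part at
most that of `[1 - t, 0]`, where `s` and `t` are their sizes, while the windows of `B` cover
`[-t, s]`. -/
theorem sum_le_mul_sum_biUnion_orderWindow {a b : ℤ → R} (ha : Antitone (a ∘ zenum))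
    (ha0 : ∀ z, 0 ≤ a z) (hb0 : ∀ x, 0 ≤ b x) (hb : ∀ x, b (-x) = b x) {d : R} (hd : 0 ≤ d)
    (hab : ∀ j, ∑ i ∈ range j, a (zenum i) ≤ d * ∑ i ∈ range j, b (zenum i))
    {B : Finset ℤ} (hB : B.Nonempty) :
    ∑ z ∈ B, a z ≤ d * ∑ x ∈ B.biUnion orderWindow, b x := by
  set s := #{z ∈ B | 0 < z}
  set t := #{z ∈ B | ¬ 0 < z}
  have hpos : ∑ z ∈ B with 0 < z, a z ≤ ∑ i ∈ range s, a (zenum (2 * i + 1)) := by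
    have hg : Set.InjOn (fun z : ℤ => (z - 1).toNat) ({z ∈ B | 0 < z} : Finset ℤ) := by
      intro x hx y hy h; simp only [coe_filter, Set.mem_ofPred_eq] at hx hy h; omega
    refine le_of_eq_of_le (sum_congr rfl fun z hz => ?_) (Antitone.sum_comp_le_sum_range
      (u := fun i => a (zenum (2 * i + 1))) (fun i j h => ha (by omega)) hg)
    rw [zenum_two_mul_add_one]; congr 1; have := (mem_filter.1 hz).2; omega
  have hneg : ∑ z ∈ B with ¬ 0 < z, a z ≤ ∑ i ∈ range t, a (zenum (2 * i)) := by
    have hg : Set.InjOn (fun z : ℤ => (-z).toNat) ({z ∈ B | ¬ 0 < z} : Finset ℤ) := by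
      intro x hx y hy h; simp only [coe_filter, Set.mem_ofPred_eq] at hx hy h; omega
    refine le_of_eq_of_le (sum_congr rfl fun z hz => ?_) (Antitone.sum_comp_le_sum_range
      (u := fun i => a (zenum (2 * i))) (fun i j h => ha (by omega)) hg)
    rw [zenum_two_mul]; congr 1; have := (mem_filter.1 hz).2; omega
  have hpair : ∀ i, b (zenum (2 * i + 2)) = b (zenum (2 * i + 1)) := fun i => by
    rw [show 2 * i + 2 = 2 * (i + 1) by ring, zenum_two_mul, zenum_two_mul_add_one, ← hb]
    push_cast; ring_nf
  have hcore := sum_odd_add_sum_even_le_mul (p := a ∘ zenum) (q := b ∘ zenum) ha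
    (fun i => ha0 _) (fun i => hb0 _) hpair hd hab s t
  rw [← sum_windowIndices (b ∘ zenum)] at hcore
  have hK : ∑ k ∈ windowIndices s t, b (zenum k) = ∑ x ∈ (windowIndices s t).image zenum, b x :=
    (sum_image zenum_injective.injOn).symm
  simp only [Function.comp_apply, hK] at hcore
  calc ∑ z ∈ B, a z = ∑ z ∈ B with 0 < z, a z + ∑ z ∈ B with ¬ 0 < z, a z :=
        (sum_filter_add_sum_filter_not B _ _).symm
    _ ≤ d * ∑ x ∈ (windowIndices s t).image zenum, b x := by linarith
    _ ≤ d * ∑ x ∈ B.biUnion orderWindow, b x :=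
        mul_le_mul_of_nonneg_left (sum_le_sum_of_subset_of_nonneg
          (image_zenum_windowIndices_subset hB) fun x _ _ => hb0 x) hd

end HallCondition

section Hall

variable {ι κ : Type*} [DecidableEq ι] [DecidableEq κ]

/-- Hall's theorem with multiplicities: each `i ∈ S` is split into `n i` units and each `k` into
`m k` slots, and units of `i` are matched injectively to slots of elements of `N i`. -/
theorem exists_injective_sigma_of_sum_le {S : Finset ι} {n : ι → ℕ} {m : κ → ℕ}
    {N : ι → Finset κ} (hall : ∀ B ⊆ S, ∑ i ∈ B, n i ≤ ∑ k ∈ B.biUnion N, m k) :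
    ∃ F : S.sigma (fun i => range (n i)) → Σ _ : κ, ℕ, Function.Injective F ∧
      ∀ u, F u ∈ (N u.1.1).sigma fun k => range (m k) := by
  refine (all_card_le_biUnion_card_iff_exists_injective _).1 fun X => ?_
  set B := X.image fun u => u.1.1
  have hBS : B ⊆ S := by
    simp only [B, image_subset_iff]
    exact fun u _ => (mem_sigma.1 u.2).1
  calc #X = #(X.map (Function.Embedding.subtype _)) := (card_map _).symm
    _ ≤ #(B.sigma fun i => range (n i)) := card_le_card fun w hw => by
        obtain ⟨u, hu, rfl⟩ := mem_map.1 hw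
        exact mem_sigma.2 ⟨mem_image_of_mem _ hu, (mem_sigma.1 u.2).2⟩
    _ = ∑ i ∈ B, n i := by simp [card_sigma]
    _ ≤ ∑ k ∈ B.biUnion N, m k := hall B hBS
    _ = #((B.biUnion N).sigma fun k => range (m k)) := by simp [card_sigma]
    _ ≤ #(X.biUnion fun u => (N u.1.1).sigma fun k => range (m k)) := card_le_card fun w hw => by
        obtain ⟨hw1, hw2⟩ := mem_sigma.1 hw
        obtain ⟨i, hi, hwi⟩ := mem_biUnion.1 hw1
        obtain ⟨u, hu, rfl⟩ := mem_image.1 hi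
        exact mem_biUnion.2 ⟨u, hu, mem_sigma.2 ⟨hwi, hw2⟩⟩

end Hall

lemma natCast_floor_mul_eq {q : ℚ} (hq : 0 ≤ q) {D : ℕ} (h : q.den ∣ D) :
    (⌊q * D⌋₊ : ℚ) = q * D := by
  obtain ⟨c, rfl⟩ := h
  have hnum : q * ↑(q.den * c) = ((q.num.toNat * c : ℕ) : ℚ) := by
    have : ((q.num.toNat : ℕ) : ℚ) = q.num := by
      exact_mod_cast Int.toNat_of_nonneg (Rat.num_nonneg.2 hq)
    push_cast
    rw [this, ← Rat.mul_den_eq_num, mul_assoc]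
  rw [hnum, Nat.floor_natCast]

lemma sum_dirac_apply {ι α : Type*} [MeasurableSpace α] [MeasurableSingletonClass α]
    (s : Finset ι) (f : ι → α) (A : Set α) [DecidablePred (· ∈ A)] :
    (∑ i ∈ s, Measure.dirac (f i)) A = #{i ∈ s | f i ∈ A} := by
  simp [Measure.finsetSum_apply, Measure.dirac_apply, Set.indicator_apply, sum_boole]

lemma inv_natCast_mul_natCast {D k : ℕ} (hD : 0 < D) :
    (D : ℝ≥0∞)⁻¹ * k = ENNReal.ofReal ((k : ℝ) / D) := by
  rw [ENNReal.ofReal_div_of_pos (by positivity), ENNReal.ofReal_natCast, ENNReal.ofReal_natCast,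
    ENNReal.div_eq_inv_mul]

/-- Clearing denominators turns `a` and `b` into multiplicities; `π` is the normalised counting
measure of a Hall matching of the units. -/
theorem exists_measure_of_sum_le_sum_biUnion {α β : Type*} [DecidableEq α] [DecidableEq β]
    [MeasurableSpace α] [MeasurableSpace β] [MeasurableSingletonClass α]
    [MeasurableSingletonClass β] {a : α → ℚ} {b : β → ℚ} (ha : ∀ z, 0 ≤ a z) (hb : ∀ x, 0 ≤ b x)
    {S : Finset α} (haS : ∀ z ∉ S, a z = 0) {N : α → Finset β}
    (hall : ∀ B ⊆ S, ∑ z ∈ B, a z ≤ ∑ x ∈ B.biUnion N, b x) :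
    ∃ π : Measure (α × β), (∀ z, π (Prod.fst ⁻¹' {z}) = ENNReal.ofReal (a z)) ∧
      (∀ x, π (Prod.snd ⁻¹' {x}) ≤ ENNReal.ofReal (b x)) ∧ ∀ᵐ p ∂π, p.2 ∈ N p.1 := by
  classical
  set Q := S.image a ∪ (S.biUnion N).image b
  set D := ∏ q ∈ Q, q.den
  have hD : 0 < D := prod_pos fun q _ => q.den_pos
  set n : α → ℕ := fun z => ⌊a z * D⌋₊
  set m : β → ℕ := fun x => ⌊b x * D⌋₊
  have hn (z : α) : (n z : ℚ) = a z * D := by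
    by_cases hz : z ∈ S
    · exact natCast_floor_mul_eq (ha z)
        (dvd_prod_of_mem _ (mem_union_left _ (mem_image_of_mem a hz)))
    · simp [n, haS z hz]
  have hm {x} (hx : x ∈ S.biUnion N) : (m x : ℚ) = b x * D :=
    natCast_floor_mul_eq (hb x) (dvd_prod_of_mem _ (mem_union_right _ (mem_image_of_mem b hx)))
  obtain ⟨F, hFinj, hF⟩ := exists_injective_sigma_of_sum_le (n := n) (m := m) fun B hB => by
    have hB' : B.biUnion N ⊆ S.biUnion N := biUnion_subset_biUnion_of_subset_left N hB
    have : ((∑ z ∈ B, n z : ℕ) : ℚ) ≤ ((∑ x ∈ B.biUnion N, m x : ℕ) : ℚ) := by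
      push_cast
      rw [sum_congr rfl fun z _ => hn z, sum_congr rfl fun x hx => hm (hB' hx), ← sum_mul,
        ← sum_mul]
      exact mul_le_mul_of_nonneg_right (hall B hB) (Nat.cast_nonneg D)
    exact_mod_cast this
  refine ⟨(D : ℝ≥0∞)⁻¹ • ∑ u, Measure.dirac (u.1.1, (F u).1), fun z => ?_, fun x => ?_, ?_⟩
  · have hcount : #{u | (u.1.1, (F u).1) ∈ Prod.fst ⁻¹' {z}} = n z := by
      simp only [Set.mem_preimage, Set.mem_singleton_iff]
      rw [card_filter, sum_coe_sort (f := fun w : Σ _ : α, ℕ => if w.1 = z then 1 else 0),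
        sum_sigma]
      rw [sum_eq_single z (fun i _ hi => by simp [hi]) (fun hz => by simp [n, haS z hz])]
      simp
    rw [Measure.smul_apply, sum_dirac_apply, smul_eq_mul, hcount, inv_natCast_mul_natCast hD]
    congr 1
    rw [div_eq_iff (by positivity)]
    exact_mod_cast hn z
  · have hcount : #{u | (u.1.1, (F u).1) ∈ Prod.snd ⁻¹' {x}} ≤ m x := by
      simp only [Set.mem_preimage, Set.mem_singleton_iff]
      refine (card_le_card_of_injOn (t := range (m x)) (fun u => (F u).2) (fun u hu => ?_)
        fun u hu v hv huv => ?_).trans (card_range _).le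
      · rw [mem_coe, mem_filter] at hu
        simpa [← hu.2] using (mem_sigma.1 (hF u)).2
      · rw [mem_coe, mem_filter] at hu hv
        exact hFinj (Sigma.ext (hu.2.trans hv.2.symm) (heq_of_eq huv))
    have hm_le : (m x : ℝ) ≤ b x * D := by
      exact_mod_cast Nat.floor_le (mul_nonneg (hb x) D.cast_nonneg)
    rw [Measure.smul_apply, sum_dirac_apply, smul_eq_mul, inv_natCast_mul_natCast hD]
    refine ENNReal.ofReal_le_ofReal ((div_le_iff₀ (by positivity)).2 (le_trans ?_ hm_le))
    exact_mod_cast hcount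
  · rw [ae_iff, Measure.smul_apply, sum_dirac_apply, smul_eq_mul]
    have hFN (u) : (F u).1 ∈ N u.1.1 := (mem_sigma.1 (hF u)).1
    simp [hFN]

lemma _root_.MeasureTheory.Measure.le_of_forall_singleton_le {α : Type*} [MeasurableSpace α]
    [Countable α] [MeasurableSingletonClass α] {μ ν : Measure α} (h : ∀ a, μ {a} ≤ ν {a}) :
    μ ≤ ν := by
  refine Measure.le_iff'.2 fun s => ?_
  rw [← Measure.tsum_indicator_apply_singleton μ s (Set.to_countable s).measurableSet,
    ← Measure.tsum_indicator_apply_singleton ν s (Set.to_countable s).measurableSet]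
  exact ENNReal.tsum_le_tsum fun a => Set.indicator_le_indicator (h a)

section Mixture

variable {X : Type*} [MeasurableSpace X] [Countable X] [MeasurableSingletonClass X]
  (α β : Measure X)

noncomputable def boolMix : Measure (X × Bool) := α.map (·, true) + β.map (·, false)

lemma measurableSet_prod_bool (s : Set (X × Bool)) : MeasurableSet s :=
  (Set.to_countable s).measurableSet

lemma measurable_prod_bool {Y : Type*} [MeasurableSpace Y] (f : X × Bool → Y) : Measurable f :=
  fun _ _ => measurableSet_prod_bool _

lemma boolMix_restrict_true : (boolMix α β).restrict {ω | ω.2 = true} = α.map (·, true) := by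
  ext s hs
  rw [Measure.restrict_apply hs, boolMix, Measure.add_apply,
    Measure.map_apply (measurable_of_countable _) (measurableSet_prod_bool _),
    Measure.map_apply (measurable_of_countable _) (measurableSet_prod_bool _),
    Measure.map_apply (measurable_of_countable _) hs]
  simp [Set.preimage]

lemma boolMix_restrict_false : (boolMix α β).restrict {ω | ω.2 = true}ᶜ = β.map (·, false) := by
  ext s hs
  rw [Measure.restrict_apply hs, boolMix, Measure.add_apply,
    Measure.map_apply (measurable_of_countable _) (measurableSet_prod_bool _),
    Measure.map_apply (measurable_of_countable _) (measurableSet_prod_bool _),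
    Measure.map_apply (measurable_of_countable _) hs]
  simp [Set.preimage]

lemma boolMix_apply_true : boolMix α β {ω | ω.2 = true} = α Set.univ := by
  rw [← Measure.restrict_apply_univ, boolMix_restrict_true,
    Measure.map_apply (measurable_of_countable _) MeasurableSet.univ, Set.preimage_univ]

lemma boolMix_apply_false : boolMix α β {ω | ω.2 = true}ᶜ = β Set.univ := by
  rw [← Measure.restrict_apply_univ, boolMix_restrict_false,
    Measure.map_apply (measurable_of_countable _) MeasurableSet.univ, Set.preimage_univ]

lemma map_boolMix {Y : Type*} [MeasurableSpace Y] (f : X → Y) :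
    (boolMix α β).map (fun ω => f ω.1) = α.map f + β.map f := by
  rw [boolMix, Measure.map_add _ _ (measurable_prod_bool _),
    Measure.map_map (measurable_prod_bool _) (measurable_of_countable _),
    Measure.map_map (measurable_prod_bool _) (measurable_of_countable _)]
  rfl

lemma map_cond_boolMix_true {Y : Type*} [MeasurableSpace Y] (f : X → Y) :
    ((boolMix α β)[|{ω | ω.2 = true}]).map (fun ω => f ω.1) = (α Set.univ)⁻¹ • α.map f := by
  rw [ProbabilityTheory.cond, boolMix_restrict_true, boolMix_apply_true, Measure.map_smul,
    Measure.map_map (measurable_prod_bool _) (measurable_of_countable _)]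
  rfl

lemma map_cond_boolMix_false {Y : Type*} [MeasurableSpace Y] (f : X → Y) :
    ((boolMix α β)[|{ω | ω.2 = true}ᶜ]).map (fun ω => f ω.1) = (β Set.univ)⁻¹ • β.map f := by
  rw [ProbabilityTheory.cond, boolMix_restrict_false, boolMix_apply_false, Measure.map_smul,
    Measure.map_map (measurable_prod_bool _) (measurable_of_countable _)]
  rfl

end Mixture

lemma indepFun_cond_boolMix_false {Y₁ Y₂ : Type*} [MeasurableSpace Y₁] [MeasurableSpace Y₂]
    [Countable Y₁] [Countable Y₂] [MeasurableSingletonClass Y₁] [MeasurableSingletonClass Y₂]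
    (α : Measure (Y₁ × Y₂)) (ν : Measure Y₁) [IsProbabilityMeasure ν] (ρ : Measure Y₂)
    [IsFiniteMeasure ρ] (hρ : ρ Set.univ ≠ 0) :
    IndepFun (fun ω => ω.1.1) (fun ω => ω.1.2) ((boolMix α (ν.prod ρ))[|{ω | ω.2 = true}ᶜ]) := by
  have hνρ : (ν.prod ρ) Set.univ = ρ Set.univ := by
    rw [← Set.univ_prod_univ, Measure.prod_prod, measure_univ, one_mul]
  rw [indepFun_iff_map_prod_eq_prod_map_map (measurable_prod_bool _).aemeasurable
    (measurable_prod_bool _).aemeasurable]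
  rw [show (fun ω : (Y₁ × Y₂) × Bool => (ω.1.1, ω.1.2)) = fun ω => id ω.1 from rfl,
    map_cond_boolMix_false, map_cond_boolMix_false (f := Prod.fst),
    map_cond_boolMix_false (f := Prod.snd), hνρ, Measure.map_id, Measure.map_fst_prod,
    Measure.map_snd_prod, measure_univ (μ := ν), one_smul, smul_smul,
    ENNReal.inv_mul_cancel hρ (measure_ne_top _ _), one_smul, Measure.prod_smul_right]

theorem nonempty_plusCoupling {ν μ' : Measure ℤ} [IsProbabilityMeasure ν]
    [IsProbabilityMeasure μ'] {ε : ℝ} {π : Measure (ℤ × ℤ)} {c : ℝ≥0∞} (hc0 : c ≠ 0)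
    (hcε : 1 / (1 + ε) ≤ c.toReal) (hfst : π.map Prod.fst = ν)
    (hsnd : c • π.map Prod.snd ≤ μ') (horder : ∀ᵐ p ∂π, p.2 ∈ orderWindow p.1) :
    Nonempty (PlusCoupling ν μ' ε) := by
  have : IsProbabilityMeasure π :=
    (Measure.isProbabilityMeasure_map_iff measurable_fst.aemeasurable).1 (hfst ▸ inferInstance)
  set τ := π.map Prod.snd
  have : IsProbabilityMeasure τ := Measure.isProbabilityMeasure_map measurable_snd.aemeasurable
  have hc1 : c ≤ 1 := by
    simpa using (Measure.le_iff'.1 hsnd) Set.univ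
  have hctop : c ≠ ∞ := ne_top_of_le_ne_top ENNReal.one_ne_top hc1
  have : IsFiniteMeasure (c • τ) := ⟨by simpa using hctop.lt_top⟩
  set ρ := μ' - c • τ
  have hρ : ρ + c • τ = μ' := Measure.sub_add_cancel_of_le hsnd
  have hρuniv : ρ Set.univ = 1 - c := by
    rw [Measure.sub_apply MeasurableSet.univ hsnd, Measure.smul_apply, measure_univ,
      measure_univ, smul_eq_mul, mul_one]
  have hνρ : (ν.prod ρ) Set.univ = 1 - c := by
    rw [← Set.univ_prod_univ, Measure.prod_prod, measure_univ, one_mul, hρuniv]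
  set P := boolMix (c • π) (ν.prod ρ)
  set A : Set ((ℤ × ℤ) × Bool) := {ω | ω.2 = true}
  have hPA : P A = c := by simp [P, A, boolMix_apply_true]
  have hPAc : P Aᶜ = 1 - c := by rw [boolMix_apply_false, hνρ]
  have : IsProbabilityMeasure P := ⟨by
    rw [← measure_add_measure_compl (measurableSet_prod_bool A), hPA, hPAc,
      add_tsub_cancel_of_le hc1]⟩
  have hlawZ : P.map (fun ω => ω.1.1) = ν := by
    rw [map_boolMix (f := Prod.fst), Measure.map_smul, hfst, Measure.map_fst_prod, hρuniv,
      ← add_smul, add_tsub_cancel_of_le hc1, one_smul]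
  have hlawX : P.map (fun ω => ω.1.2) = μ' := by
    rw [map_boolMix (f := Prod.snd), Measure.map_smul, Measure.map_snd_prod, measure_univ,
      one_smul, add_comm, hρ]
  have hcondA : (P[|A]).map (fun ω => ω.1.1) = ν := by
    rw [map_cond_boolMix_true (f := Prod.fst), Measure.map_smul, hfst, Measure.smul_apply,
      measure_univ, smul_eq_mul, mul_one, smul_smul, ENNReal.inv_mul_cancel hc0 hctop, one_smul]
  have horderP : ∀ᵐ ω ∂P, ω ∈ A → (0 ≤ ω.1.2 ∧ ω.1.2 ≤ ω.1.1) ∨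
      (ω.1.1 - 1 ≤ ω.1.2 ∧ ω.1.2 ≤ 0) := by
    refine ae_add_measure_iff.2 ⟨?_, ?_⟩ <;>
      rw [ae_map_iff (measurable_of_countable _).aemeasurable (measurableSet_prod_bool _)]
    · exact (Measure.ae_smul_measure horder c).mono fun p hp _ => mem_orderWindow.1 hp
    · exact Filter.Eventually.of_forall fun p hp => absurd hp (by simp [A])
  have hcondAc (hAc : P Aᶜ ≠ 0) : (P[|Aᶜ]).map (fun ω => ω.1.1) = ν := by
    rw [hPAc] at hAc
    rw [map_cond_boolMix_false (f := Prod.fst), hνρ, Measure.map_fst_prod, hρuniv, smul_smul,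
      ENNReal.inv_mul_cancel hAc (ENNReal.sub_ne_top ENNReal.one_ne_top), one_smul]
  have hindep (hAc : P Aᶜ ≠ 0) : IndepFun (fun ω => ω.1.1) (fun ω => ω.1.2) (P[|Aᶜ]) :=
    indepFun_cond_boolMix_false _ _ _ (by rwa [hPAc, ← hρuniv] at hAc)
  exact ⟨⟨(ℤ × ℤ) × Bool, P, inferInstance, _, _, A, measurable_prod_bool _,
    measurable_prod_bool _, measurableSet_prod_bool _, hlawZ, hlawX, by rwa [hPA], hcondA,
    horderP, hcondAc, hindep⟩⟩

lemma ratCast_eq_toReal {μ : Measure ℤ} {a : ℤ → ℚ} (ha0 : ∀ x, 0 ≤ a x)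
    (ha : ∀ x, μ {x} = ENNReal.ofReal (a x)) (x : ℤ) : (a x : ℝ) = (μ {x}).toReal := by
  rw [ha, ENNReal.toReal_ofReal (by exact_mod_cast ha0 x)]

lemma exists_rat_slack {ν μ' : Measure ℤ} {a b : ℤ → ℚ} (ha0 : ∀ x, 0 ≤ a x)
    (ha : ∀ x, ν {x} = ENNReal.ofReal (a x)) (hb0 : ∀ x, 0 ≤ b x)
    (hb : ∀ x, μ' {x} = ENNReal.ofReal (b x)) {n : ℕ} (hνn : ∀ j, n ≤ j → ν {zenum j} = 0)
    (hμ'0 : μ' {zenum 0} ≠ 0) {ε : ℝ} (hε : 0 ≤ ε)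
    (h : ∀ j, 0 < j → ∑ i ∈ range j, (ν {zenum i}).toReal
      ≤ (1 + ε) * ∑ i ∈ range j, (μ' {zenum i}).toReal) :
    ∃ d : ℚ, 1 ≤ d ∧ (d : ℝ) ≤ 1 + ε ∧
      ∀ j, ∑ i ∈ range j, a (zenum i) ≤ d * ∑ i ∈ range j, b (zenum i) :=
  exists_rat_le_of_sum_le (p := a ∘ zenum) (q := b ∘ zenum) n
    (fun j hj => Rat.cast_eq_zero.1 (by
      rw [Function.comp_apply, ratCast_eq_toReal ha0 ha, hνn j hj, ENNReal.toReal_zero]))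
    (fun i => hb0 _)
    (Rat.cast_pos.1 (by
      rw [Function.comp_apply, ratCast_eq_toReal hb0 hb]
      exact ENNReal.toReal_pos hμ'0 (hb _ ▸ ENNReal.ofReal_ne_top)))
    hε fun j hj => by
      simpa only [Function.comp_apply, ratCast_eq_toReal ha0 ha, ratCast_eq_toReal hb0 hb]
        using h j hj

theorem nonempty_plusCoupling_of_ratAtoms {ν μ' : Measure ℤ} [IsProbabilityMeasure ν]
    [IsProbabilityMeasure μ'] {a b : ℤ → ℚ} (ha0 : ∀ x, 0 ≤ a x)
    (ha : ∀ x, ν {x} = ENNReal.ofReal (a x)) (hb0 : ∀ x, 0 ≤ b x)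
    (hb : ∀ x, μ' {x} = ENNReal.ofReal (b x)) (hν : Antitone fun k => ν {zenum k}) {n : ℕ}
    (hνn : ∀ j, n ≤ j → ν {zenum j} = 0) (hsymm : IsSymmetricZ μ') {ε : ℝ} {d : ℚ}
    (hd1 : 1 ≤ d) (hdε : (d : ℝ) ≤ 1 + ε)
    (hd : ∀ j, ∑ i ∈ range j, a (zenum i) ≤ d * ∑ i ∈ range j, b (zenum i)) :
    Nonempty (PlusCoupling ν μ' ε) := by
  have ha_anti : Antitone (a ∘ zenum) := fun i j hij => (Rat.cast_le (K := ℝ)).1 (by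
    simp only [Function.comp_apply, ratCast_eq_toReal ha0 ha]
    exact ENNReal.toReal_mono (measure_ne_top _ _) (hν hij))
  have hb_symm (x : ℤ) : b (-x) = b x :=
    Rat.cast_injective (α := ℝ) (by simp only [ratCast_eq_toReal hb0 hb, hsymm x])
  have haS (z) (hz : z ∉ (range n).image zenum) : a z = 0 := by
    refine (Rat.cast_eq_zero (α := ℝ)).1 ?_
    rw [ratCast_eq_toReal ha0 ha, ← zenum_zenumInv z,
      hνn _ (not_lt.1 fun h => hz (mem_image.2 ⟨_, mem_range.2 h, zenum_zenumInv z⟩)),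
      ENNReal.toReal_zero]
  obtain ⟨π, hπfst, hπsnd, hπorder⟩ := exists_measure_of_sum_le_sum_biUnion
    (b := fun x => d * b x) ha0 (fun x => mul_nonneg (by linarith) (hb0 x)) haS fun B _ => by
      rcases B.eq_empty_or_nonempty with rfl | hB
      · simp
      rw [← mul_sum]
      exact sum_le_mul_sum_biUnion_orderWindow ha_anti ha0 hb0 hb_symm (by linarith) hd hB
  have hdpos : (0 : ℝ) < d := by exact_mod_cast zero_lt_one.trans_le hd1
  refine nonempty_plusCoupling (π := π) (c := (ENNReal.ofReal d)⁻¹)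
    (ENNReal.inv_ne_zero.2 ENNReal.ofReal_ne_top) ?_ ?_ ?_ hπorder
  · rw [ENNReal.toReal_inv, ENNReal.toReal_ofReal hdpos.le, one_div]
    exact inv_anti₀ hdpos hdε
  · exact Measure.ext_of_singleton fun z => by
      rw [Measure.map_apply measurable_fst (measurableSet_singleton z), hπfst, ha]
  · refine Measure.le_of_forall_singleton_le fun x => ?_
    rw [Measure.smul_apply, Measure.map_apply measurable_snd (measurableSet_singleton x),
      smul_eq_mul, hb]
    calc (ENNReal.ofReal d)⁻¹ * π (Prod.snd ⁻¹' {x})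
        ≤ (ENNReal.ofReal d)⁻¹ * (ENNReal.ofReal d * ENNReal.ofReal (b x)) := by
          rw [← ENNReal.ofReal_mul hdpos.le]
          gcongr
          simpa using hπsnd x
      _ = ENNReal.ofReal (b x) :=
          ENNReal.inv_mul_cancel_left (ENNReal.ofReal_pos.2 hdpos).ne' ENNReal.ofReal_ne_top

end ConcentrationCoupling

open ConcentrationCoupling

theorem statement12_general (μ μ' : MeasureTheory.Measure ℤ)
    (hμ : MeasureTheory.IsProbabilityMeasure μ)
    (hμ' : MeasureTheory.IsProbabilityMeasure μ')
    (hfin : ∃ s : Finset ℤ, ∀ x ∉ s, μ {x} = 0)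
    (hrat : ∀ x : ℤ, ∃ q : ℚ, μ {x} = ENNReal.ofReal (q : ℝ))
    (hrat' : ∀ x : ℤ, ∃ q : ℚ, μ' {x} = ENNReal.ofReal (q : ℝ))
    (hsymm : IsSymmetricZ μ') (huni : IsUnimodal μ')
    (ε : ℝ) (hε : 0 ≤ ε) (hdom : EpsDom ε μ μ') :
    ∃ ν : MeasureTheory.Measure ℤ, IsPlusRearrangement μ ν ∧
      Nonempty (PlusCoupling ν μ' ε) := by
  obtain ⟨ν, hν, hplus, n, hνn⟩ := exists_isPlusRearrangement μ hfin
  obtain ⟨a, ha0, ha⟩ := exists_rat_atoms fun x => by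
    obtain ⟨f, hf⟩ := hplus.1
    exact hf x ▸ hrat (f x)
  obtain ⟨b, hb0, hb⟩ := exists_rat_atoms hrat'
  have hμ'anti := antitone_measure_zenum hsymm huni
  obtain ⟨d, hd1, hdε, hd⟩ := exists_rat_slack ha0 ha hb0 hb hνn
    (measure_singleton_zenum_zero_ne_zero hμ'anti) hε fun j hj =>
      sum_range_toReal_le_of_epsDom (by linarith) hdom hplus hμ'anti hj
  exact ⟨ν, hplus, nonempty_plusCoupling_of_ratAtoms ha0 ha hb0 hb
    (fun i j hij => hplus.2 i j hij) hνn hsymm hd1 hdε hd⟩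

theorem statement12 (μ μ' : MeasureTheory.Measure ℤ)
    (hμ : MeasureTheory.IsProbabilityMeasure μ)
    (hμ' : MeasureTheory.IsProbabilityMeasure μ')
    (hfin : ∃ s : Finset ℤ, ∀ x ∉ s, μ {x} = 0)
    (hfin' : ∃ s : Finset ℤ, ∀ x ∉ s, μ' {x} = 0)
    (hrat : ∀ x : ℤ, ∃ q : ℚ, μ {x} = ENNReal.ofReal (q : ℝ))
    (hrat' : ∀ x : ℤ, ∃ q : ℚ, μ' {x} = ENNReal.ofReal (q : ℝ))
    (hsymm : IsSymmetricZ μ') (huni : IsUnimodal μ')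
    (ε : ℝ) (hε : 0 ≤ ε) (hdom : EpsDom ε μ μ') :
    ∃ ν : MeasureTheory.Measure ℤ, IsPlusRearrangement μ ν ∧
      Nonempty (PlusCoupling ν μ' ε) :=
  statement12_general μ μ' hμ hμ' hfin hrat hrat' hsymm huni ε hε hdom
end
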